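/- arXiv:2603.09764 — 6 statements merged into one kernel-verified Lean document; each statement's English description precedes it below -/
import Mathlib

section
/- Let B be a quaternion algebra over a field K of characteristic ≠ 2 and u ∈ B a nonzero isotropic element (Nrd(u) = 0). Then Trd(u) = 0 if and only if ker(ℓ_u) ∩ B₀ = ker(r_u) ∩ B₀ = K·u, where ℓ_u and r_u denote left and right multiplication by u. -/
open Quaternion

/-- The reduced trace of a quaternion: `Trd x = x + star x = 2 * x.re`. -/
def Trd {K : Type*} [Field K] {a b : K} (x : ℍ[K, a, b]) : K := 2 * x.re

/-- The reduced norm of a quaternion: the scalar `x * star x`. -/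
def Nrd {K : Type*} [Field K] {a b : K} (x : ℍ[K, a, b]) : K := (x * star x).re

/-- The subspace `B₀` of pure quaternions (reduced trace zero elements). -/
def pureQuaternions (K : Type*) [Field K] (a b : K) : Submodule K ℍ[K, a, b] where
  carrier := {x | Trd x = 0}
  add_mem' := by
    intro x y hx hy
    simp only [Set.mem_setOf_eq, Trd, QuaternionAlgebra.re_add] at *
    linear_combination hx + hy
  zero_mem' := by simp [Trd]
  smul_mem' := by
    intro c x hx
    simp only [Set.mem_setOf_eq, Trd, QuaternionAlgebra.re_smul, smul_eq_mul] at *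
    rw [mul_left_comm, hx, mul_zero]

private lemma prop_lemma {K : Type*} [Field K] {x₁ y₁ z₁ x₂ y₂ z₂ : K}
    (hne : ¬(x₁ = 0 ∧ y₁ = 0 ∧ z₁ = 0))
    (h1 : z₁ * y₂ = y₁ * z₂) (h2 : x₁ * z₂ = z₁ * x₂) (h3 : x₁ * y₂ = y₁ * x₂) :
    ∃ c, c * x₁ = x₂ ∧ c * y₁ = y₂ ∧ c * z₁ = z₂ := by
  by_cases hx : x₁ = 0
  · by_cases hy : y₁ = 0
    · have hz : z₁ ≠ 0 := fun h => hne ⟨hx, hy, h⟩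
      have hx2 : x₂ = 0 := by
        rw [hx, zero_mul] at h2
        exact (mul_eq_zero.mp h2.symm).resolve_left hz
      have hy2 : y₂ = 0 := by
        rw [hy, zero_mul] at h1
        exact (mul_eq_zero.mp h1).resolve_left hz
      exact ⟨z₂ / z₁, by simp [hx, hx2], by simp [hy, hy2], div_mul_cancel₀ _ hz⟩
    · have hx2 : x₂ = 0 := by
        rw [hx, zero_mul] at h3
        exact (mul_eq_zero.mp h3.symm).resolve_left hy
      refine ⟨y₂ / y₁, by simp [hx, hx2], div_mul_cancel₀ _ hy, ?_⟩
      rw [div_mul_eq_mul_div, div_eq_iff hy]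
      linear_combination h1
  · refine ⟨x₂ / x₁, div_mul_cancel₀ _ hx, ?_, ?_⟩ <;>
      rw [div_mul_eq_mul_div, div_eq_iff hx]
    · linear_combination -h3
    · linear_combination -h2

/-- For `u ≠ 0` isotropic, `Trd u = 0` if and only if
`ker(ℓ_u) ∩ B₀ = ker(r_u) ∩ B₀ = K·u`. -/
theorem trd_eq_zero_iff_kernels_eq_span {K : Type*} [Field K] (hchar : (2 : K) ≠ 0)
    (a b : K) (ha : a ≠ 0) (hb : b ≠ 0) (u : ℍ[K, a, b]) (hu : u ≠ 0) (hiso : Nrd u = 0) :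
    Trd u = 0 ↔
      LinearMap.ker (LinearMap.mulLeft K u) ⊓ pureQuaternions K a b =
          Submodule.span K {u} ∧
        LinearMap.ker (LinearMap.mulRight K u) ⊓ pureQuaternions K a b =
          Submodule.span K {u} := by
  constructor
  · intro htrd
    have hre : u.re = 0 := by
      have h := htrd
      unfold Trd at h
      exact (mul_eq_zero.mp h).resolve_left hchar
    have hN : a * u.imI ^ 2 + b * u.imJ ^ 2 - a * b * u.imK ^ 2 = 0 := by
      have h := hiso
      simp only [Nrd, QuaternionAlgebra.re_mul, QuaternionAlgebra.re_star,
        QuaternionAlgebra.imI_star, QuaternionAlgebra.imJ_star, QuaternionAlgebra.imK_star,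
        hre] at h
      linear_combination -h
    have hne : ¬(u.imI = 0 ∧ u.imJ = 0 ∧ u.imK = 0) := by
      rintro ⟨h1, h2, h3⟩
      exact hu (QuaternionAlgebra.ext hre h1 h2 h3)
    have huu : u * u = 0 := by
      apply QuaternionAlgebra.ext <;>
        simp only [QuaternionAlgebra.re_mul, QuaternionAlgebra.imI_mul,
          QuaternionAlgebra.imJ_mul, QuaternionAlgebra.imK_mul, hre,
          QuaternionAlgebra.re_zero, QuaternionAlgebra.imI_zero,
          QuaternionAlgebra.imJ_zero, QuaternionAlgebra.imK_zero]
      · linear_combination hN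
      all_goals ring
    constructor
    · apply le_antisymm
      · rintro v ⟨hker, hpure⟩
        have hvre : v.re = 0 := by
          have h : (2 : K) * v.re = 0 := hpure
          exact (mul_eq_zero.mp h).resolve_left hchar
        have hmul : u * v = 0 := hker
        rw [QuaternionAlgebra.ext_iff] at hmul
        obtain ⟨_, e1, e2, e3⟩ := hmul
        simp only [QuaternionAlgebra.imI_mul, QuaternionAlgebra.imJ_mul,
          QuaternionAlgebra.imK_mul, hre, hvre, QuaternionAlgebra.imI_zero,
          QuaternionAlgebra.imJ_zero, QuaternionAlgebra.imK_zero] at e1 e2 e3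
        have m1 : u.imK * v.imJ = u.imJ * v.imK := by
          have h' : b * (u.imK * v.imJ - u.imJ * v.imK) = 0 := by linear_combination e1
          have := (mul_eq_zero.mp h').resolve_left hb
          linear_combination this
        have m2 : u.imI * v.imK = u.imK * v.imI := by
          have h' : a * (u.imI * v.imK - u.imK * v.imI) = 0 := by linear_combination e2
          have := (mul_eq_zero.mp h').resolve_left ha
          linear_combination this
        have m3 : u.imI * v.imJ = u.imJ * v.imI := by linear_combination e3
        obtain ⟨c, hc1, hc2, hc3⟩ := prop_lemma hne m1 m2 m3
        rw [Submodule.mem_span_singleton]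
        refine ⟨c, QuaternionAlgebra.ext ?_ ?_ ?_ ?_⟩ <;>
          simp only [QuaternionAlgebra.re_smul, QuaternionAlgebra.imI_smul,
            QuaternionAlgebra.imJ_smul, QuaternionAlgebra.imK_smul, smul_eq_mul,
            hre, hvre, mul_zero]
        · exact hc1
        · exact hc2
        · exact hc3
      · rw [Submodule.span_singleton_le_iff_mem]
        exact ⟨huu, htrd⟩
    · apply le_antisymm
      · rintro v ⟨hker, hpure⟩
        have hvre : v.re = 0 := by
          have h : (2 : K) * v.re = 0 := hpure
          exact (mul_eq_zero.mp h).resolve_left hchar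
        have hmul : v * u = 0 := hker
        rw [QuaternionAlgebra.ext_iff] at hmul
        obtain ⟨_, e1, e2, e3⟩ := hmul
        simp only [QuaternionAlgebra.imI_mul, QuaternionAlgebra.imJ_mul,
          QuaternionAlgebra.imK_mul, hre, hvre, QuaternionAlgebra.imI_zero,
          QuaternionAlgebra.imJ_zero, QuaternionAlgebra.imK_zero] at e1 e2 e3
        have m1 : u.imK * v.imJ = u.imJ * v.imK := by
          have h' : b * (u.imK * v.imJ - u.imJ * v.imK) = 0 := by linear_combination -e1
          have := (mul_eq_zero.mp h').resolve_left hb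
          linear_combination this
        have m2 : u.imI * v.imK = u.imK * v.imI := by
          have h' : a * (u.imI * v.imK - u.imK * v.imI) = 0 := by linear_combination -e2
          have := (mul_eq_zero.mp h').resolve_left ha
          linear_combination this
        have m3 : u.imI * v.imJ = u.imJ * v.imI := by linear_combination -e3
        obtain ⟨c, hc1, hc2, hc3⟩ := prop_lemma hne m1 m2 m3
        rw [Submodule.mem_span_singleton]
        refine ⟨c, QuaternionAlgebra.ext ?_ ?_ ?_ ?_⟩ <;>
          simp only [QuaternionAlgebra.re_smul, QuaternionAlgebra.imI_smul,
            QuaternionAlgebra.imJ_smul, QuaternionAlgebra.imK_smul, smul_eq_mul,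
            hre, hvre, mul_zero]
        · exact hc1
        · exact hc2
        · exact hc3
      · rw [Submodule.span_singleton_le_iff_mem]
        exact ⟨huu, htrd⟩
  · rintro ⟨h1, -⟩
    have hm : u ∈ LinearMap.ker (LinearMap.mulLeft K u) ⊓ pureQuaternions K a b := by
      rw [h1]; exact Submodule.mem_span_singleton_self u
    exact hm.2
end

section
/- Let B be a quaternion algebra over a field K of characteristic ≠ 2 and u ∈ B a nonzero isotropic element with Trd(u) ≠ 0. Then ker(ℓ_u) = (ker(ℓ_u) ∩ B₀) ⊕ K·conj(u), where conj is the standard involution. -/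
open Quaternion

/-- For `u ≠ 0` isotropic with `Trd u ≠ 0`, the kernel of left
multiplication by `u` decomposes as the (internal) direct sum
`ker(ℓ_u) = (ker(ℓ_u) ∩ B₀) ⊕ K·(star u)`. -/
theorem ker_leftMul_eq_inf_pure_sup_span_star {K : Type*} [Field K] (hchar : (2 : K) ≠ 0)
    (a b : K) (ha : a ≠ 0) (hb : b ≠ 0) (u : ℍ[K, a, b]) (hu : u ≠ 0) (hiso : Nrd u = 0)
    (htrd : Trd u ≠ 0) :
    LinearMap.ker (LinearMap.mulLeft K u) =
        (LinearMap.ker (LinearMap.mulLeft K u) ⊓ pureQuaternions K a b) ⊔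
          Submodule.span K {star u} ∧
      (LinearMap.ker (LinearMap.mulLeft K u) ⊓ pureQuaternions K a b) ⊓
          Submodule.span K {star u} = ⊥ := by
  have hms : u * star u = 0 := by
    rw [QuaternionAlgebra.mul_star_eq_coe]
    have : (u * star u).re = 0 := hiso
    rw [this]; simp
  have hstarker : star u ∈ LinearMap.ker (LinearMap.mulLeft K u) := by
    simp [LinearMap.mem_ker, hms]
  constructor
  · apply le_antisymm
    · intro x hx
      have hx' : u * x = 0 := hx
      set c := Trd x / Trd u with hc
      have h1 : x - c • star u ∈
          LinearMap.ker (LinearMap.mulLeft K u) ⊓ pureQuaternions K a b := by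
        constructor
        · show u * (x - c • star u) = 0
          rw [mul_sub, hx', mul_smul_comm, hms, smul_zero, sub_zero]
        · show Trd (x - c • star u) = 0
          simp only [Trd, QuaternionAlgebra.re_sub, QuaternionAlgebra.re_smul,
            QuaternionAlgebra.re_star, smul_eq_mul, hc, Trd]
          have hre : u.re ≠ 0 := fun h => htrd (by simp [Trd, h])
          field_simp
          ring
      have h2 : c • star u ∈ Submodule.span K {star u} :=
        Submodule.smul_mem _ _ (Submodule.mem_span_singleton_self _)
      have := Submodule.add_mem_sup h1 h2
      simpa using this
    · exact sup_le inf_le_left (Submodule.span_le.mpr (Set.singleton_subset_iff.mpr hstarker))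
  · rw [eq_bot_iff]
    rintro x ⟨⟨-, hpure⟩, hspan⟩
    obtain ⟨c, rfl⟩ := Submodule.mem_span_singleton.mp hspan
    have hp : Trd (c • star u) = 0 := hpure
    simp only [Trd, QuaternionAlgebra.re_smul, QuaternionAlgebra.re_star, smul_eq_mul] at hp
    have : c * Trd u = 0 := by rw [Trd]; linear_combination hp
    rcases mul_eq_zero.mp this with h | h
    · simp [h]
    · exact absurd h htrd
end

section
/- Let B be a quaternion algebra over a field K of characteristic ≠ 2 and u ∈ B a nonzero isotropic element with Trd(u) = 0. Then ker(ℓ_u) = u·B, i.e. the kernel of left multiplication by u equals the image of right multiplication by u. -/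
open Quaternion

/-- For `u ≠ 0` isotropic with `Trd u = 0`, the kernel of left
multiplication by `u` equals `u·B = {u·x : x ∈ B}` (the image of `x ↦ u·x`). -/
theorem ker_leftMul_eq_range_leftMul_of_trd_eq_zero {K : Type*} [Field K]
    (hchar : (2 : K) ≠ 0) (a b : K) (ha : a ≠ 0) (hb : b ≠ 0)
    (u : ℍ[K, a, b]) (hu : u ≠ 0) (hiso : Nrd u = 0) (htrd : Trd u = 0) :
    LinearMap.ker (LinearMap.mulLeft K u) = LinearMap.range (LinearMap.mulLeft K u) := by
  have hre : u.re = 0 := by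
    have h2 : 2 * u.re = 0 := htrd
    exact (mul_eq_zero.mp h2).resolve_left hchar
  have hn : (u * star u).re = 0 := hiso
  have hsr : (star u).re = u.re := by simp
  have hsi : (star u).imI = -u.imI := rfl
  have hsj : (star u).imJ = -u.imJ := rfl
  have hsk : (star u).imK = -u.imK := rfl
  rw [QuaternionAlgebra.re_mul, hsr, hsi, hsj, hsk, hre] at hn
  -- hn : -a u.imI² - b u.imJ² + a b u.imK² = 0 form
  have husq : u * u = 0 := by
    ext <;>
      simp only [QuaternionAlgebra.re_mul, QuaternionAlgebra.imI_mul,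
        QuaternionAlgebra.imJ_mul, QuaternionAlgebra.imK_mul, QuaternionAlgebra.re_zero,
        QuaternionAlgebra.imI_zero, QuaternionAlgebra.imJ_zero, QuaternionAlgebra.imK_zero,
        hre] <;> first | linear_combination -hn | ring
  have hle : LinearMap.range (LinearMap.mulLeft K u) ≤ LinearMap.ker (LinearMap.mulLeft K u) := by
    rintro _ ⟨x, rfl⟩
    simp only [LinearMap.mem_ker, LinearMap.mulLeft_apply, ← mul_assoc, husq, zero_mul]
  -- pick v with u, u*v linearly independent
  obtain ⟨v, hli⟩ : ∃ v : ℍ[K,a,b], LinearIndependent K ![u, u * v] := by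
    have key : ∀ v : ℍ[K,a,b], (u * v).re ≠ 0 → LinearIndependent K ![u, u * v] := by
      intro v hv
      rw [LinearIndependent.pair_iff]
      intro s t hst
      have h0 : s * u.re + t * (u * v).re = 0 := by
        have := congrArg QuaternionAlgebra.re hst
        simpa using this
      rw [hre, mul_zero, zero_add] at h0
      have ht : t = 0 := by
        rcases mul_eq_zero.mp h0 with h | h
        · exact h
        · exact absurd h hv
      subst ht
      simp only [zero_smul, add_zero, smul_eq_zero] at hst
      exact ⟨hst.resolve_right hu, rfl⟩
    by_cases hx : u.imI ≠ 0
    · refine ⟨⟨0,1,0,0⟩, key _ ?_⟩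
      simp [QuaternionAlgebra.re_mul, hre, ha, hx]
    by_cases hy : u.imJ ≠ 0
    · refine ⟨⟨0,0,1,0⟩, key _ ?_⟩
      simp [QuaternionAlgebra.re_mul, hre, hb, hy]
    push_neg at hx hy
    exfalso
    have hz : u.imK = 0 := by
      have hzz : a * b * u.imK ^ 2 = 0 := by linear_combination hn + (a * u.imI) * hx + (b * u.imJ) * hy
      rcases mul_eq_zero.mp hzz with h | h
      · exact ((mul_ne_zero ha hb) h).elim
      · exact pow_eq_zero_iff (n := 2) (by norm_num) |>.mp h
    apply hu
    ext <;> simp [hre, hx, hy, hz]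
  -- dimension count
  have h4 : Module.finrank K ℍ[K,a,b] = 4 := QuaternionAlgebra.finrank_eq_four a 0 b
  have hrk : 2 ≤ Module.finrank K (LinearMap.range (LinearMap.mulLeft K u)) := by
    have hsub : Submodule.span K (Set.range ![u, u * v]) ≤
        LinearMap.range (LinearMap.mulLeft K u) := by
      rw [Submodule.span_le]
      rintro x ⟨i, rfl⟩
      fin_cases i
      · exact ⟨1, by simp⟩
      · exact ⟨v, rfl⟩
    have := finrank_span_eq_card hli
    calc (2 : ℕ) = Module.finrank K (Submodule.span K (Set.range ![u, u * v])) := by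
          rw [this]; simp
      _ ≤ _ := Submodule.finrank_mono hsub
  have hrn := LinearMap.finrank_range_add_finrank_ker (LinearMap.mulLeft K u)
  rw [h4] at hrn
  refine (Submodule.eq_of_le_of_finrank_le hle ?_).symm
  omega
end

section
/- Let B be a quaternion algebra over a field K of characteristic ≠ 2 and u ∈ B a nonzero isotropic element with Trd(u) ≠ 0. Then the orthogonal complement of Span_K(1, u) in B, with respect to the bilinear form (x,y) = Trd(x·conj(y)) associated to the reduced norm, equals (ker(ℓ_u) ∩ B₀) ⊕ (ker(r_u) ∩ B₀), and these two lines are distinct. -/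
open Quaternion

private lemma re_mul_comm {K : Type*} [Field K] {a b : K} (x y : ℍ[K, a, b]) :
    (x * y).re = (y * x).re := by
  simp only [QuaternionAlgebra.re_mul]; ring

private lemma mem_pure_iff {K : Type*} [Field K] {a b : K} (x : ℍ[K, a, b]) :
    x ∈ pureQuaternions K a b ↔ Trd x = 0 := Iff.rfl

/-- For `u ≠ 0` isotropic with `Trd u ≠ 0`, the orthogonal complement of
`Span_K(1, u)` in `B` with respect to the bilinear form `(x, y) ↦ Trd (x * star y)`
associated to the reduced norm equals `(ker(ℓ_u) ∩ B₀) ⊕ (ker(r_u) ∩ B₀)`, and these two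
lines are distinct. -/
theorem orthogonal_span_one_u_eq {K : Type*} [Field K] (hchar : (2 : K) ≠ 0)
    (a b : K) (ha : a ≠ 0) (hb : b ≠ 0) (u : ℍ[K, a, b]) (hu : u ≠ 0) (hiso : Nrd u = 0)
    (htrd : Trd u ≠ 0) :
    (∀ x : ℍ[K, a, b],
        (∀ y ∈ Submodule.span K ({1, u} : Set ℍ[K, a, b]), Trd (x * star y) = 0) ↔
          x ∈ (LinearMap.ker (LinearMap.mulLeft K u) ⊓ pureQuaternions K a b) ⊔
                (LinearMap.ker (LinearMap.mulRight K u) ⊓ pureQuaternions K a b)) ∧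
      LinearMap.ker (LinearMap.mulLeft K u) ⊓ pureQuaternions K a b ≠
        LinearMap.ker (LinearMap.mulRight K u) ⊓ pureQuaternions K a b := by
  set t : K := 2 * u.re with htdef
  have hp : u.re ≠ 0 := by
    intro h; exact htrd (by simp [Trd, h])
  have ht : t ≠ 0 := by
    rw [htdef]; exact mul_ne_zero hchar hp
  have hN : u.re ^ 2 - a * u.imI ^ 2 - b * u.imJ ^ 2 + a * b * u.imK ^ 2 = 0 := by
    have h := hiso
    simp only [Nrd, QuaternionAlgebra.re_mul, QuaternionAlgebra.re_star,
      QuaternionAlgebra.imI_star, QuaternionAlgebra.imJ_star, QuaternionAlgebra.imK_star] at h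
    linear_combination h
  have hu2 : u * u = t • u := by
    ext
    · simp only [QuaternionAlgebra.re_mul, QuaternionAlgebra.re_smul, smul_eq_mul, htdef]
      linear_combination -hN
    · simp only [QuaternionAlgebra.imI_mul, QuaternionAlgebra.imI_smul, smul_eq_mul, htdef]; ring
    · simp only [QuaternionAlgebra.imJ_mul, QuaternionAlgebra.imJ_smul, smul_eq_mul, htdef]; ring
    · simp only [QuaternionAlgebra.imK_mul, QuaternionAlgebra.imK_smul, smul_eq_mul, htdef]; ring
  have hscal : t⁻¹ * t⁻¹ * t = t⁻¹ := by
    rw [mul_assoc, inv_mul_cancel₀ ht, mul_one]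
  -- main decomposition lemma
  have hmem : ∀ x : ℍ[K, a, b], x.re = 0 →
      a * u.imI * x.imI + b * u.imJ * x.imJ - a * b * u.imK * x.imK = 0 →
      x ∈ (LinearMap.ker (LinearMap.mulLeft K u) ⊓ pureQuaternions K a b) ⊔
            (LinearMap.ker (LinearMap.mulRight K u) ⊓ pureQuaternions K a b) := by
    intro x hre hC
    have hxu_re : (x * u).re = 0 := by
      simp only [QuaternionAlgebra.re_mul]
      linear_combination u.re * hre + hC
    have hux_re : (u * x).re = 0 := by rw [re_mul_comm]; exact hxu_re
    have huxu_re : (u * (x * u)).re = 0 := by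
      rw [re_mul_comm, mul_assoc, hu2, mul_smul_comm]
      simp [QuaternionAlgebra.re_smul, hxu_re]
    have key : (t * t) • x = t • (x * u) + t • (u * x) - (2 : K) • (u * (x * u)) := by
      ext
      · simp only [QuaternionAlgebra.re_smul, QuaternionAlgebra.re_add,
          QuaternionAlgebra.re_sub, QuaternionAlgebra.re_mul, QuaternionAlgebra.imI_mul,
          QuaternionAlgebra.imJ_mul, QuaternionAlgebra.imK_mul, smul_eq_mul, htdef]
        linear_combination (-2 * x.re) * hN + (4 * u.re ^ 2) * hre
      · simp only [QuaternionAlgebra.imI_smul, QuaternionAlgebra.imI_add,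
          QuaternionAlgebra.imI_sub, QuaternionAlgebra.re_mul, QuaternionAlgebra.imI_mul,
          QuaternionAlgebra.imJ_mul, QuaternionAlgebra.imK_mul, smul_eq_mul, htdef]
        linear_combination (2 * x.imI) * hN + (4 * u.imI) * hC
      · simp only [QuaternionAlgebra.imJ_smul, QuaternionAlgebra.imJ_add,
          QuaternionAlgebra.imJ_sub, QuaternionAlgebra.re_mul, QuaternionAlgebra.imI_mul,
          QuaternionAlgebra.imJ_mul, QuaternionAlgebra.imK_mul, smul_eq_mul, htdef]
        linear_combination (2 * x.imJ) * hN + (4 * u.imJ) * hC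
      · simp only [QuaternionAlgebra.imK_smul, QuaternionAlgebra.imK_add,
          QuaternionAlgebra.imK_sub, QuaternionAlgebra.re_mul, QuaternionAlgebra.imI_mul,
          QuaternionAlgebra.imJ_mul, QuaternionAlgebra.imK_mul, smul_eq_mul, htdef]
        linear_combination (2 * x.imK) * hN + (4 * u.imK) * hC
    have huy : u * (t⁻¹ • (x * u) - (t⁻¹ * t⁻¹) • (u * (x * u))) = 0 := by
      rw [mul_sub, mul_smul_comm, mul_smul_comm, ← mul_assoc u u (x * u), hu2,
        smul_mul_assoc, smul_smul, hscal, sub_self]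
    have hzu : (t⁻¹ • (u * x) - (t⁻¹ * t⁻¹) • (u * (x * u))) * u = 0 := by
      rw [sub_mul, smul_mul_assoc, smul_mul_assoc, mul_assoc u x u,
        mul_assoc u (x * u) u, mul_assoc x u u, hu2, mul_smul_comm t x u,
        mul_smul_comm t u (x * u), smul_smul, hscal, sub_self]
    refine Submodule.mem_sup.mpr
      ⟨t⁻¹ • (x * u) - (t⁻¹ * t⁻¹) • (u * (x * u)),
        Submodule.mem_inf.mpr ⟨LinearMap.mem_ker.mpr (by rw [LinearMap.mulLeft_apply]; exact huy),
          (mem_pure_iff _).mpr (by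
            simp [Trd, QuaternionAlgebra.re_sub, QuaternionAlgebra.re_smul, hxu_re, huxu_re])⟩,
       t⁻¹ • (u * x) - (t⁻¹ * t⁻¹) • (u * (x * u)),
        Submodule.mem_inf.mpr ⟨LinearMap.mem_ker.mpr (by rw [LinearMap.mulRight_apply]; exact hzu),
          (mem_pure_iff _).mpr (by
            simp [Trd, QuaternionAlgebra.re_sub, QuaternionAlgebra.re_smul, hux_re, huxu_re])⟩,
       ?_⟩
    have hone : t⁻¹ * t⁻¹ * (t * t) = 1 := by field_simp
    conv_rhs => rw [← one_smul K x, ← hone, ← smul_smul, key]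
    match_scalars <;> (field_simp; try ring)
  constructor
  · intro x
    constructor
    · intro h
      have h1 := h 1 (Submodule.subset_span (Set.mem_insert 1 {u}))
      have h2 := h u (Submodule.subset_span (Set.mem_insert_of_mem _ rfl))
      simp only [star_one, mul_one, Trd] at h1
      have hre : x.re = 0 := (mul_eq_zero.mp h1).resolve_left hchar
      simp only [Trd, QuaternionAlgebra.re_mul, QuaternionAlgebra.re_star,
        QuaternionAlgebra.imI_star, QuaternionAlgebra.imJ_star,
        QuaternionAlgebra.imK_star] at h2
      have hC2 : 2 * (a * u.imI * x.imI + b * u.imJ * x.imJ - a * b * u.imK * x.imK) = 0 := by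
        linear_combination (-1 : K) * h2 + (2 * u.re) * hre
      exact hmem x hre ((mul_eq_zero.mp hC2).resolve_left hchar)
    · intro hx v hv
      obtain ⟨y, hy, z, hz, rfl⟩ := Submodule.mem_sup.mp hx
      obtain ⟨hy1, hy2⟩ := Submodule.mem_inf.mp hy
      obtain ⟨hz1, hz2⟩ := Submodule.mem_inf.mp hz
      have huy : u * y = 0 := by
        have := LinearMap.mem_ker.mp hy1; rwa [LinearMap.mulLeft_apply] at this
      have hzu : z * u = 0 := by
        have := LinearMap.mem_ker.mp hz1; rwa [LinearMap.mulRight_apply] at this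
      have hty : (2 : K) * y.re = 0 := (mem_pure_iff y).mp hy2
      have htz : (2 : K) * z.re = 0 := (mem_pure_iff z).mp hz2
      have hyre : y.re = 0 := (mul_eq_zero.mp hty).resolve_left hchar
      have hzre : z.re = 0 := (mul_eq_zero.mp htz).resolve_left hchar
      induction hv using Submodule.span_induction with
      | mem v hv =>
        simp only [Set.mem_insert_iff, Set.mem_singleton_iff] at hv
        rcases hv with rfl | hveq
        · simp [Trd, hyre, hzre]
        · rw [hveq]
          have h1 : (y * u).re = 0 := by rw [re_mul_comm, huy]; simp
          have h2 : (z * u).re = 0 := by rw [hzu]; simp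
          simp only [QuaternionAlgebra.re_mul] at h1 h2
          simp only [Trd, add_mul, QuaternionAlgebra.re_add, QuaternionAlgebra.re_mul,
            QuaternionAlgebra.re_star, QuaternionAlgebra.imI_star, QuaternionAlgebra.imJ_star,
            QuaternionAlgebra.imK_star]
          linear_combination (-2 : K) * h1 + (-2 : K) * h2 + (4 * u.re) * hyre
            + (4 * u.re) * hzre
      | zero => simp [Trd]
      | add v w hv hw ihv ihw =>
        simp only [star_add, mul_add, Trd, QuaternionAlgebra.re_add]
        simp only [Trd] at ihv ihw
        linear_combination ihv + ihw
      | smul c v hv ih =>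
        rw [QuaternionAlgebra.star_smul, mul_smul_comm]
        simp only [Trd, QuaternionAlgebra.re_smul, smul_eq_mul]
        simp only [Trd] at ih
        linear_combination c * ih
  · intro heq
    have key2 : ∀ x : ℍ[K, a, b], x.re = 0 →
        a * u.imI * x.imI + b * u.imJ * x.imJ - a * b * u.imK * x.imK = 0 →
        u * x = 0 ∧ x * u = 0 := by
      intro x hre hC
      have hx1 := hmem x hre hC
      have hx2 := hmem x hre hC
      rw [heq, sup_idem] at hx1
      rw [← heq, sup_idem] at hx2
      constructor
      · have := LinearMap.mem_ker.mp (Submodule.mem_inf.mp hx2).1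
        rwa [LinearMap.mulLeft_apply] at this
      · have := LinearMap.mem_ker.mp (Submodule.mem_inf.mp hx1).1
        rwa [LinearMap.mulRight_apply] at this
    obtain ⟨e1, -⟩ := key2 ⟨0, b * u.imJ, -(a * u.imI), 0⟩ rfl (by ring)
    obtain ⟨e2, e3⟩ := key2 ⟨0, 0, a * u.imK, u.imJ⟩ rfl (by ring)
    have f1 := congrArg QuaternionAlgebra.imK e1
    have f2 := congrArg QuaternionAlgebra.imK e2
    have f3 := congrArg QuaternionAlgebra.imK e3
    simp only [QuaternionAlgebra.imK_mul, QuaternionAlgebra.imK_zero] at f1 f2 f3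
    -- f2 : u.re * u.imJ + u.imI * (a*u.imK) - ... = 0 ; f3 similar
    have hr : u.imJ = 0 := by
      have h2r : (2 : K) * (u.re * u.imJ) = 0 := by linear_combination f2 + f3
      have := (mul_eq_zero.mp h2r).resolve_left hchar
      exact (mul_eq_zero.mp this).resolve_left hp
    have hq : u.imI = 0 := by
      have haq : a * (u.imI * u.imI) = 0 := by linear_combination (-1 : K) * f1 - b * u.imJ * hr
      have := (mul_eq_zero.mp haq).resolve_left ha
      rcases mul_eq_zero.mp this with h | h <;> exact h
    obtain ⟨e4, -⟩ := key2 ⟨0, 1, 0, 0⟩ rfl (by rw [hq, hr]; ring)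
    have f4 := congrArg QuaternionAlgebra.imI e4
    simp only [QuaternionAlgebra.imI_mul, QuaternionAlgebra.imI_zero] at f4
    exact hp (by linear_combination f4)
end

section
/- Let B be a quaternion algebra over a field K of characteristic ≠ 2. The map sending an isotropic line [u] in B (u ≠ 0, Nrd(u)=0) to the pair of isotropic lines (ker(r_u) ∩ B₀, ker(ℓ_u) ∩ B₀) in B₀ is a bijection from the set of isotropic lines of (B, Nrd) to the set of pairs of isotropic lines of (B₀, Nrd), equivariant for the Bˣ × Bˣ-action on the source (by γ⋅u = γ₁uγ₂⁻¹) and the componentwise conjugation actions on the target. -/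
open Quaternion

/-- Conjugation `x ↦ γ · x · γ⁻¹` by a unit, as a `K`-linear map. -/
noncomputable def conjMap {K : Type*} [Field K] {a b : K} (γ : (ℍ[K, a, b])ˣ) :
    ℍ[K, a, b] →ₗ[K] ℍ[K, a, b] :=
  (LinearMap.mulRight K ((γ⁻¹ : (ℍ[K, a, b])ˣ) : ℍ[K, a, b])).comp
    (LinearMap.mulLeft K (γ : ℍ[K, a, b]))

/-- The action `v ↦ γ₁ · v · γ₂⁻¹` of a pair of units, as a `K`-linear map. -/
noncomputable def pairMap {K : Type*} [Field K] {a b : K} (γ₁ γ₂ : (ℍ[K, a, b])ˣ) :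
    ℍ[K, a, b] →ₗ[K] ℍ[K, a, b] :=
  (LinearMap.mulRight K ((γ₂⁻¹ : (ℍ[K, a, b])ˣ) : ℍ[K, a, b])).comp
    (LinearMap.mulLeft K (γ₁ : ℍ[K, a, b]))

/-- A line of the quadratic space `(B, Nrd)`: a 1-dimensional subspace on which the
reduced norm vanishes. -/
def IsIsotropicLine {K : Type*} [Field K] {a b : K} (W : Submodule K ℍ[K, a, b]) : Prop :=
  Module.finrank K ↥W = 1 ∧ ∀ x ∈ W, Nrd x = 0

/-- An isotropic line of the quadratic space `(B₀, Nrd)` of pure quaternions. -/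
def IsIsotropicLine₀ {K : Type*} [Field K] {a b : K} (W : Submodule K ℍ[K, a, b]) : Prop :=
  IsIsotropicLine W ∧ W ≤ pureQuaternions K a b


section QuatAux

open QuaternionAlgebra Module Submodule LinearMap

variable {K : Type*} [Field K] {a b : K}

theorem mem_pure {x : ℍ[K, a, b]} : x ∈ pureQuaternions K a b ↔ Trd x = 0 := Iff.rfl

theorem mul_star_eq (x : ℍ[K, a, b]) : x * star x = ((Nrd x : K) : ℍ[K, a, b]) := by
  unfold Nrd; exact QuaternionAlgebra.mul_star_eq_coe x

theorem star_mul_eq (x : ℍ[K, a, b]) : star x * x = ((Nrd x : K) : ℍ[K, a, b]) := by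
  rw [star_comm_self']; exact mul_star_eq x

theorem isUnit_of_nrd (x : ℍ[K, a, b]) (h : Nrd x ≠ 0) : IsUnit x := by
  have h1 : x * ((Nrd x)⁻¹ • star x) = 1 := by
    rw [mul_smul_comm, mul_star_eq]
    ext <;> simp [inv_mul_cancel₀ h]
  have h2 : ((Nrd x)⁻¹ • star x) * x = 1 := by
    rw [smul_mul_assoc, star_mul_eq]
    ext <;> simp [inv_mul_cancel₀ h]
  exact ⟨⟨x, (Nrd x)⁻¹ • star x, h1, h2⟩, rfl⟩

theorem nrd_zero_of_mul_left {x y : ℍ[K, a, b]} (h : x * y = 0) (hy : y ≠ 0) : Nrd x = 0 := by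
  by_contra hn
  obtain ⟨v, hv⟩ := isUnit_of_nrd x hn
  apply hy
  have h2 : (↑v⁻¹ : ℍ[K, a, b]) * (x * y) = 0 := by rw [h, mul_zero]
  rwa [← hv, ← mul_assoc, Units.inv_mul, one_mul] at h2

theorem nrd_zero_of_mul_right {x y : ℍ[K, a, b]} (h : x * y = 0) (hx : x ≠ 0) : Nrd y = 0 := by
  by_contra hn
  obtain ⟨v, hv⟩ := isUnit_of_nrd y hn
  apply hx
  have h2 : x * y * (↑v⁻¹ : ℍ[K, a, b]) = 0 := by rw [h, zero_mul]
  rwa [← hv, mul_assoc, Units.mul_inv, mul_one] at h2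

theorem nrd_mul_zero {m n : ℍ[K, a, b]} (h : Nrd n = 0) : Nrd (m * n) = 0 := by
  have h1 : (m * n) * star (m * n) = 0 := by
    rw [star_mul]
    have : m * n * (star n * star m) = m * (n * star n) * star m := by noncomm_ring
    rw [this, mul_star_eq, h, QuaternionAlgebra.coe_zero, mul_zero, zero_mul]
  show ((m * n) * star (m * n)).re = 0
  rw [h1]; rfl

theorem nrd_smul (c : K) (x : ℍ[K, a, b]) : Nrd (c • x) = c ^ 2 * Nrd x := by
  show ((c • x) * star (c • x)).re = c ^ 2 * (x * star x).re
  rw [QuaternionAlgebra.star_smul, smul_mul_assoc, mul_smul_comm, smul_smul]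
  simp only [QuaternionAlgebra.re_smul, smul_eq_mul]
  ring

theorem nrd_add (x y : ℍ[K, a, b]) : Nrd (x + y) = Nrd x + Nrd y + Trd (x * star y) := by
  simp only [Nrd, Trd, star_add, mul_add, add_mul, QuaternionAlgebra.re_add,
    QuaternionAlgebra.re_mul, QuaternionAlgebra.re_star, QuaternionAlgebra.imI_star,
    QuaternionAlgebra.imJ_star, QuaternionAlgebra.imK_star]
  ring

theorem trd_mul_comm (x y : ℍ[K, a, b]) : Trd (x * y) = Trd (y * x) := by
  simp only [Trd, QuaternionAlgebra.re_mul]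
  ring

theorem sq_zero (hchar : (2 : K) ≠ 0) {x : ℍ[K, a, b]} (ht : Trd x = 0) (hn : Nrd x = 0) :
    x * x = 0 := by
  have hre : x.re = 0 := by
    rcases mul_eq_zero.mp ht with h | h
    · exact absurd h hchar
    · exact h
  have hstar : star x = -x := by ext <;> simp [hre]
  have h1 := mul_star_eq x
  rw [hstar, hn, QuaternionAlgebra.coe_zero, mul_neg, neg_eq_zero] at h1
  exact h1

private theorem star_smul' (c : K) (x : ℍ[K, a, b]) : star (c • x) = c • star x :=
  QuaternionAlgebra.star_smul c x

/-- The polar bilinear form of the reduced norm. -/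
noncomputable def tau (a b : K) : LinearMap.BilinForm K ℍ[K, a, b] :=
  LinearMap.mk₂ K (fun x y => Trd (x * star y))
    (fun m₁ m₂ n => by simp only [Trd, add_mul, QuaternionAlgebra.re_add]; try ring)
    (fun c m n => by
      simp only [Trd, smul_mul_assoc, QuaternionAlgebra.re_smul, smul_eq_mul]; ring)
    (fun m n₁ n₂ => by simp only [Trd, star_add, mul_add, QuaternionAlgebra.re_add]; try ring)
    (fun c m n => by
      simp only [Trd, QuaternionAlgebra.star_smul', mul_smul_comm, QuaternionAlgebra.re_smul, smul_eq_mul]; ring)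

theorem tau_apply (x y : ℍ[K, a, b]) : tau a b x y = Trd (x * star y) := rfl

theorem tau_explicit (x y : ℍ[K, a, b]) :
    tau a b x y = 2 * (x.re * y.re - a * x.imI * y.imI - b * x.imJ * y.imJ
      + a * b * x.imK * y.imK) := by
  simp only [tau_apply, Trd, QuaternionAlgebra.re_mul, QuaternionAlgebra.re_star,
    QuaternionAlgebra.imI_star, QuaternionAlgebra.imJ_star, QuaternionAlgebra.imK_star]
  ring

theorem tau_symm (x y : ℍ[K, a, b]) : tau a b x y = tau a b y x := by
  rw [tau_explicit, tau_explicit]; ring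

theorem tau_refl : (tau a b).IsRefl := by
  intro x y h
  rw [tau_symm] at h
  exact h

theorem tau_nondeg (hchar : (2 : K) ≠ 0) (ha : a ≠ 0) (hb : b ≠ 0) :
    (tau a b).Nondegenerate := by
  suffices hL : (tau a b).SeparatingLeft from
    ⟨hL, fun y hy => hL y (fun x => by rw [tau_symm]; exact hy x)⟩
  intro x hx
  have h0 := hx 1
  have h1 := hx ⟨0, 1, 0, 0⟩
  have h2 := hx ⟨0, 0, 1, 0⟩
  have h3 := hx ⟨0, 0, 0, 1⟩
  rw [tau_explicit] at h0 h1 h2 h3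
  simp only [QuaternionAlgebra.re_one, QuaternionAlgebra.imI_one, QuaternionAlgebra.imJ_one,
    QuaternionAlgebra.imK_one, mul_one, mul_zero, zero_mul, sub_zero, add_zero, zero_add,
    zero_sub, neg_eq_zero, mul_eq_zero] at h0 h1 h2 h3
  have hre : x.re = 0 := by tauto
  have himI : x.imI = 0 := by rcases h1 with h | h; exact absurd h hchar; tauto
  have himJ : x.imJ = 0 := by rcases h2 with h | h; exact absurd h hchar; tauto
  have himK : x.imK = 0 := by rcases h3 with h | h; exact absurd h hchar; tauto
  ext <;> simp [hre, himI, himJ, himK]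

end QuatAux

section QuatAux2

open QuaternionAlgebra Module Submodule LinearMap

variable {K : Type*} [Field K] {a b : K}

theorem finrank_le_two (hchar : (2 : K) ≠ 0) (ha : a ≠ 0) (hb : b ≠ 0)
    {S : Submodule K ℍ[K, a, b]} (hS : ∀ x ∈ S, Nrd x = 0) : finrank K S ≤ 2 := by
  have hle : S ≤ (tau a b).orthogonal S := by
    intro x hx
    rw [LinearMap.BilinForm.mem_orthogonal_iff]
    intro n hn
    show tau a b n x = 0
    have hpol := nrd_add n x
    rw [hS n hn, hS x hx, hS _ (S.add_mem hn hx)] at hpol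
    rw [tau_apply]
    linear_combination -hpol
  have h4 : finrank K ℍ[K, a, b] = 4 := QuaternionAlgebra.finrank_eq_four a 0 b
  have horth := LinearMap.BilinForm.finrank_orthogonal (tau_nondeg hchar ha hb) S
  have hmono := Submodule.finrank_mono hle
  omega

theorem finrank_ker_mulLeft (hchar : (2 : K) ≠ 0) (ha : a ≠ 0) (hb : b ≠ 0)
    {u : ℍ[K, a, b]} (hu : u ≠ 0) (h0 : Nrd u = 0) :
    finrank K (LinearMap.ker (LinearMap.mulLeft K u)) = 2 := by
  have key : ∀ v : ℍ[K, a, b], v ≠ 0 →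
      finrank K (LinearMap.ker (LinearMap.mulLeft K v)) ≤ 2 := by
    intro v hv
    apply finrank_le_two hchar ha hb
    intro x hx
    rw [LinearMap.mem_ker, LinearMap.mulLeft_apply] at hx
    exact nrd_zero_of_mul_right hx hv
  have hsu : star u ≠ 0 := by simpa using hu
  have hle : LinearMap.range (LinearMap.mulLeft K u) ≤
      LinearMap.ker (LinearMap.mulLeft K (star u)) := by
    rintro y ⟨x, rfl⟩
    rw [LinearMap.mem_ker, LinearMap.mulLeft_apply, LinearMap.mulLeft_apply, ← mul_assoc,
      star_mul_eq, h0, QuaternionAlgebra.coe_zero, zero_mul]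
  have h4 : finrank K ℍ[K, a, b] = 4 := QuaternionAlgebra.finrank_eq_four a 0 b
  have hrn := LinearMap.finrank_range_add_finrank_ker (LinearMap.mulLeft K u)
  rw [h4] at hrn
  have h1 := Submodule.finrank_mono hle
  have h2 := key u hu
  have h3 := key (star u) hsu
  omega

theorem finrank_ker_mulRight (hchar : (2 : K) ≠ 0) (ha : a ≠ 0) (hb : b ≠ 0)
    {u : ℍ[K, a, b]} (hu : u ≠ 0) (h0 : Nrd u = 0) :
    finrank K (LinearMap.ker (LinearMap.mulRight K u)) = 2 := by
  have key : ∀ v : ℍ[K, a, b], v ≠ 0 →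
      finrank K (LinearMap.ker (LinearMap.mulRight K v)) ≤ 2 := by
    intro v hv
    apply finrank_le_two hchar ha hb
    intro x hx
    rw [LinearMap.mem_ker, LinearMap.mulRight_apply] at hx
    exact nrd_zero_of_mul_left hx hv
  have hsu : star u ≠ 0 := by simpa using hu
  have hle : LinearMap.range (LinearMap.mulRight K u) ≤
      LinearMap.ker (LinearMap.mulRight K (star u)) := by
    rintro y ⟨x, rfl⟩
    rw [LinearMap.mem_ker, LinearMap.mulRight_apply, LinearMap.mulRight_apply, mul_assoc,
      mul_star_eq, h0, QuaternionAlgebra.coe_zero, mul_zero]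
  have h4 : finrank K ℍ[K, a, b] = 4 := QuaternionAlgebra.finrank_eq_four a 0 b
  have hrn := LinearMap.finrank_range_add_finrank_ker (LinearMap.mulRight K u)
  rw [h4] at hrn
  have h1 := Submodule.finrank_mono hle
  have h2 := key u hu
  have h3 := key (star u) hsu
  omega

theorem finrank_pure (hchar : (2 : K) ≠ 0) : finrank K (pureQuaternions K a b) = 3 := by
  have h4 : finrank K ℍ[K, a, b] = 4 := QuaternionAlgebra.finrank_eq_four a 0 b
  let T : ℍ[K, a, b] →ₗ[K] K := (2 : K) • QuaternionAlgebra.reₗ a 0 b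
  have hker : pureQuaternions K a b = LinearMap.ker T := by
    ext x
    show Trd x = 0 ↔ _
    simp [T, Trd, LinearMap.mem_ker]
  have hrange : LinearMap.range T = ⊤ := by
    rw [LinearMap.range_eq_top]
    intro c
    refine ⟨((2⁻¹ * c : K) : ℍ[K, a, b]), ?_⟩
    show (2 : K) • ((2⁻¹ * c : K) : ℍ[K, a, b]).re = c
    rw [QuaternionAlgebra.re_coe, smul_eq_mul, ← mul_assoc, mul_inv_cancel₀ hchar, one_mul]
  have hrn := LinearMap.finrank_range_add_finrank_ker T
  rw [hrange, finrank_top, Module.finrank_self, h4] at hrn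
  rw [hker]
  omega

theorem exists_trd (hchar : (2 : K) ≠ 0) (ha : a ≠ 0) (hb : b ≠ 0)
    {u : ℍ[K, a, b]} (hu : u ≠ 0) : ∃ y : ℍ[K, a, b], Trd (y * star u) ≠ 0 := by
  by_contra h
  push_neg at h
  apply hu
  apply (tau_nondeg hchar ha hb).1
  intro n
  rw [tau_symm, tau_apply]
  exact h n

theorem finrank_inf_right (hchar : (2 : K) ≠ 0) (ha : a ≠ 0) (hb : b ≠ 0)
    {u : ℍ[K, a, b]} (hu : u ≠ 0) (h0 : Nrd u = 0) :
    finrank K (LinearMap.ker (LinearMap.mulRight K u) ⊓ pureQuaternions K a b : Submodule K ℍ[K, a, b]) = 1 := by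
  set A := LinearMap.ker (LinearMap.mulRight K u) with hAdef
  set C := pureQuaternions K a b with hCdef
  have hA : finrank K A = 2 := finrank_ker_mulRight hchar ha hb hu h0
  have hC : finrank K C = 3 := finrank_pure hchar
  have h4 : finrank K ℍ[K, a, b] = 4 := QuaternionAlgebra.finrank_eq_four a 0 b
  have hsum := Submodule.finrank_sup_add_finrank_inf_eq A C
  have hle4 : finrank K (A ⊔ C : Submodule K ℍ[K, a, b]) ≤ 4 := h4 ▸ Submodule.finrank_le _
  have hne : ¬ A ≤ C := by
    obtain ⟨y, hy⟩ := exists_trd hchar ha hb hu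
    intro hAC
    apply hy
    have hmem : y * star u ∈ A := by
      rw [hAdef, LinearMap.mem_ker, LinearMap.mulRight_apply, mul_assoc, star_mul_eq, h0,
        QuaternionAlgebra.coe_zero, mul_zero]
    exact hAC hmem
  have hmono := Submodule.finrank_mono (inf_le_left : A ⊓ C ≤ A)
  have hne2 : finrank K (A ⊓ C : Submodule K ℍ[K, a, b]) ≠ 2 := by
    intro he
    apply hne
    rw [← inf_eq_left]
    exact Submodule.eq_of_le_of_finrank_le inf_le_left (by omega)
  omega

theorem finrank_inf_left (hchar : (2 : K) ≠ 0) (ha : a ≠ 0) (hb : b ≠ 0)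
    {u : ℍ[K, a, b]} (hu : u ≠ 0) (h0 : Nrd u = 0) :
    finrank K (LinearMap.ker (LinearMap.mulLeft K u) ⊓ pureQuaternions K a b : Submodule K ℍ[K, a, b]) = 1 := by
  set A := LinearMap.ker (LinearMap.mulLeft K u) with hAdef
  set C := pureQuaternions K a b with hCdef
  have hA : finrank K A = 2 := finrank_ker_mulLeft hchar ha hb hu h0
  have hC : finrank K C = 3 := finrank_pure hchar
  have h4 : finrank K ℍ[K, a, b] = 4 := QuaternionAlgebra.finrank_eq_four a 0 b
  have hsum := Submodule.finrank_sup_add_finrank_inf_eq A C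
  have hle4 : finrank K (A ⊔ C : Submodule K ℍ[K, a, b]) ≤ 4 := h4 ▸ Submodule.finrank_le _
  have hne : ¬ A ≤ C := by
    obtain ⟨y, hy⟩ := exists_trd hchar ha hb hu
    intro hAC
    have hmem : star u * y ∈ A := by
      rw [hAdef, LinearMap.mem_ker, LinearMap.mulLeft_apply, ← mul_assoc, mul_star_eq, h0,
        QuaternionAlgebra.coe_zero, zero_mul]
    have := hAC hmem
    rw [mem_pure, trd_mul_comm] at this
    exact hy this
  have hmono := Submodule.finrank_mono (inf_le_left : A ⊓ C ≤ A)
  have hne2 : finrank K (A ⊓ C : Submodule K ℍ[K, a, b]) ≠ 2 := by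
    intro he
    apply hne
    rw [← inf_eq_left]
    exact Submodule.eq_of_le_of_finrank_le inf_le_left (by omega)
  omega

theorem exists_gen {W : Submodule K ℍ[K, a, b]} (h1 : finrank K W = 1) :
    ∃ u : ℍ[K, a, b], u ≠ 0 ∧ W = Submodule.span K {u} := by
  have hbot : W ≠ ⊥ := by
    intro h
    rw [h, finrank_bot] at h1
    omega
  obtain ⟨u, huW, hu0⟩ := Submodule.exists_mem_ne_zero_of_ne_bot hbot
  refine ⟨u, hu0, ?_⟩
  symm
  apply Submodule.eq_of_le_of_finrank_le ((Submodule.span_singleton_le_iff_mem _ _).mpr huW)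
  rw [finrank_span_singleton hu0]
  omega

theorem span_eq_of_mem {S : Submodule K ℍ[K, a, b]} (h1 : finrank K S = 1) {x : ℍ[K, a, b]}
    (hx : x ∈ S) (hx0 : x ≠ 0) : S = Submodule.span K {x} := by
  symm
  apply Submodule.eq_of_le_of_finrank_le ((Submodule.span_singleton_le_iff_mem _ _).mpr hx)
  rw [finrank_span_singleton hx0, h1]

theorem kers_eq {u v : ℍ[K, a, b]} (hv : v ≠ 0) (h : v ∈ Submodule.span K ({u} : Set ℍ[K, a, b])) :
    LinearMap.ker (LinearMap.mulRight K u) = LinearMap.ker (LinearMap.mulRight K v) ∧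
    LinearMap.ker (LinearMap.mulLeft K u) = LinearMap.ker (LinearMap.mulLeft K v) := by
  obtain ⟨c, rfl⟩ := Submodule.mem_span_singleton.mp h
  have hc : c ≠ 0 := by
    rintro rfl
    simp at hv
  constructor <;> ext x <;>
    simp [LinearMap.mem_ker, mul_smul_comm, smul_mul_assoc, smul_eq_zero, hc]

end QuatAux2

section QuatAux3

open QuaternionAlgebra Module Submodule LinearMap

variable {K : Type*} [Field K] {a b : K}

theorem quat_avg (ha : a ≠ 0) (hb : b ≠ 0) (x : ℍ[K, a, b]) :
    ((4 : K) * x.re) • (1 : ℍ[K, a, b]) =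
      x + a⁻¹ • ((⟨0, 1, 0, 0⟩ : ℍ[K, a, b]) * x * ⟨0, 1, 0, 0⟩)
        + b⁻¹ • ((⟨0, 0, 1, 0⟩ : ℍ[K, a, b]) * x * ⟨0, 0, 1, 0⟩)
        - (a * b)⁻¹ • ((⟨0, 0, 0, 1⟩ : ℍ[K, a, b]) * x * ⟨0, 0, 0, 1⟩) := by
  ext <;>
    simp only [QuaternionAlgebra.re_mul, QuaternionAlgebra.imI_mul, QuaternionAlgebra.imJ_mul,
      QuaternionAlgebra.imK_mul, QuaternionAlgebra.re_smul, QuaternionAlgebra.imI_smul,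
      QuaternionAlgebra.imJ_smul, QuaternionAlgebra.imK_smul, QuaternionAlgebra.re_add,
      QuaternionAlgebra.imI_add, QuaternionAlgebra.imJ_add, QuaternionAlgebra.imK_add,
      QuaternionAlgebra.re_sub, QuaternionAlgebra.imI_sub, QuaternionAlgebra.imJ_sub,
      QuaternionAlgebra.imK_sub, QuaternionAlgebra.re_one, QuaternionAlgebra.imI_one,
      QuaternionAlgebra.imJ_one, QuaternionAlgebra.imK_one, smul_eq_mul] <;>
    field_simp <;> ring

theorem ideal_top (hchar : (2 : K) ≠ 0) (ha : a ≠ 0) (hb : b ≠ 0)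
    {T : Submodule K ℍ[K, a, b]}
    (hL : ∀ y : ℍ[K, a, b], ∀ x ∈ T, y * x ∈ T)
    (hR : ∀ y : ℍ[K, a, b], ∀ x ∈ T, x * y ∈ T)
    {t : ℍ[K, a, b]} (ht : t ∈ T) (ht0 : t ≠ 0) : T = ⊤ := by
  have key : ∀ x ∈ T, ((4 : K) * x.re) • (1 : ℍ[K, a, b]) ∈ T := by
    intro x hx
    rw [quat_avg ha hb x]
    exact sub_mem
      (add_mem (add_mem hx (T.smul_mem _ (hR _ _ (hL _ _ hx))))
        (T.smul_mem _ (hR _ _ (hL _ _ hx))))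
      (T.smul_mem _ (hR _ _ (hL _ _ hx)))
  obtain ⟨w, hw, hwre⟩ : ∃ w ∈ T, w.re ≠ 0 := by
    by_contra hcon
    push_neg at hcon
    apply ht0
    have h0 : t.re = 0 := hcon t ht
    have hI := hcon _ (hL ⟨0, 1, 0, 0⟩ t ht)
    have hJ := hcon _ (hL ⟨0, 0, 1, 0⟩ t ht)
    have hK := hcon _ (hL ⟨0, 0, 0, 1⟩ t ht)
    rw [QuaternionAlgebra.re_mul] at hI hJ hK
    simp only [mul_one, mul_zero, zero_mul, one_mul, sub_zero, add_zero, zero_add, zero_sub,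
      neg_eq_zero, mul_eq_zero] at hI hJ hK
    have h1 : t.imI = 0 := by
      rcases hI with h | h
      · exact absurd h ha
      · exact h
    have h2 : t.imJ = 0 := by
      rcases hJ with h | h
      · exact absurd h hb
      · exact h
    have h3 : t.imK = 0 := by
      rcases hK with (h | h) | h
      · exact absurd h ha
      · exact absurd h hb
      · exact h
    ext <;> simp [h0, h1, h2, h3]
  have h4 : (4 : K) * w.re ≠ 0 := by
    apply mul_ne_zero _ hwre
    have : (4 : K) = 2 * 2 := by norm_num
    rw [this]
    exact mul_ne_zero hchar hchar
  have h1T : (1 : ℍ[K, a, b]) ∈ T := by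
    have hmem := T.smul_mem ((4 * w.re)⁻¹) (key w hw)
    rwa [smul_smul, inv_mul_cancel₀ h4, one_smul] at hmem
  rw [eq_top_iff]
  intro z _
  simpa using hL z 1 h1T

theorem span_eq_span (hchar : (2 : K) ≠ 0) (ha : a ≠ 0) (hb : b ≠ 0)
    {u u' m n : ℍ[K, a, b]} (hu : u ≠ 0) (hu' : u' ≠ 0) (hm : m ≠ 0) (hn : n ≠ 0)
    (hNm : Nrd m = 0) (hNn : Nrd n = 0)
    (hmu : m * u = 0) (hmu' : m * u' = 0) (hun : u * n = 0) (hu'n : u' * n = 0) :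
    Submodule.span K ({u} : Set ℍ[K, a, b]) = Submodule.span K ({u'} : Set ℍ[K, a, b]) := by
  set Dl := LinearMap.ker (LinearMap.mulLeft K m) with hDldef
  set Dr := LinearMap.ker (LinearMap.mulRight K n) with hDrdef
  have hDl : finrank K Dl = 2 := finrank_ker_mulLeft hchar ha hb hm hNm
  have hDr : finrank K Dr = 2 := finrank_ker_mulRight hchar ha hb hn hNn
  have huE : u ∈ Dl ⊓ Dr := by
    refine Submodule.mem_inf.mpr ⟨?_, ?_⟩
    · rw [hDldef, LinearMap.mem_ker, LinearMap.mulLeft_apply]; exact hmu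
    · rw [hDrdef, LinearMap.mem_ker, LinearMap.mulRight_apply]; exact hun
  have hu'E : u' ∈ Dl ⊓ Dr := by
    refine Submodule.mem_inf.mpr ⟨?_, ?_⟩
    · rw [hDldef, LinearMap.mem_ker, LinearMap.mulLeft_apply]; exact hmu'
    · rw [hDrdef, LinearMap.mem_ker, LinearMap.mulRight_apply]; exact hu'n
  have hE2 : finrank K (Dl ⊓ Dr : Submodule K ℍ[K, a, b]) ≤ 2 :=
    hDl ▸ Submodule.finrank_mono inf_le_left
  by_cases hcase : finrank K (Dl ⊓ Dr : Submodule K ℍ[K, a, b]) ≤ 1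
  · have hge : 1 ≤ finrank K (Dl ⊓ Dr : Submodule K ℍ[K, a, b]) := by
      have := Submodule.finrank_mono ((Submodule.span_singleton_le_iff_mem _ _).mpr huE)
      rwa [finrank_span_singleton hu] at this
    have h1 : finrank K (Dl ⊓ Dr : Submodule K ℍ[K, a, b]) = 1 := le_antisymm hcase hge
    exact (span_eq_of_mem h1 huE hu).symm.trans (span_eq_of_mem h1 hu'E hu')
  · exfalso
    have hE : finrank K (Dl ⊓ Dr : Submodule K ℍ[K, a, b]) = 2 := by omega
    have hEl : Dl ⊓ Dr = Dl := Submodule.eq_of_le_of_finrank_le inf_le_left (by omega)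
    have hEr : Dl ⊓ Dr = Dr := Submodule.eq_of_le_of_finrank_le inf_le_right (by omega)
    have hDlr : Dl = Dr := hEl ▸ hEr
    have hLclosed : ∀ y : ℍ[K, a, b], ∀ x ∈ Dl, y * x ∈ Dl := by
      intro y x hx
      rw [hDlr] at hx ⊢
      rw [LinearMap.mem_ker, LinearMap.mulRight_apply] at hx ⊢
      rw [mul_assoc, hx, mul_zero]
    have hRclosed : ∀ y : ℍ[K, a, b], ∀ x ∈ Dl, x * y ∈ Dl := by
      intro y x hx
      rw [LinearMap.mem_ker, LinearMap.mulLeft_apply] at hx ⊢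
      rw [← mul_assoc, hx, zero_mul]
    have htop := ideal_top hchar ha hb hLclosed hRclosed (Submodule.mem_inf.mp huE).1 hu
    rw [htop, finrank_top, QuaternionAlgebra.finrank_eq_four] at hDl
    omega

end QuatAux3

/-- The map `[u] ↦ (ker(r_u) ∩ B₀, ker(ℓ_u) ∩ B₀)` is a bijection from the
set of isotropic lines of `(B, Nrd)` onto the set of pairs of isotropic lines of `(B₀, Nrd)`,
equivariant for the `Bˣ × Bˣ`-action `γ ⋅ u = γ₁ u γ₂⁻¹` on the source and the
componentwise conjugation action on the target. -/
theorem isotropic_lines_bijection {K : Type*} [Field K] (hchar : (2 : K) ≠ 0)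
    (a b : K) (ha : a ≠ 0) (hb : b ≠ 0) :
    ∃ f : {W : Submodule K ℍ[K, a, b] // IsIsotropicLine W} →
        Submodule K ℍ[K, a, b] × Submodule K ℍ[K, a, b],
      (∀ (W : {W : Submodule K ℍ[K, a, b] // IsIsotropicLine W}) (u : ℍ[K, a, b]),
          u ≠ 0 → W.1 = Submodule.span K {u} →
            f W = (LinearMap.ker (LinearMap.mulRight K u) ⊓ pureQuaternions K a b,
                   LinearMap.ker (LinearMap.mulLeft K u) ⊓ pureQuaternions K a b)) ∧
      (∀ W, IsIsotropicLine₀ (f W).1 ∧ IsIsotropicLine₀ (f W).2) ∧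
      Function.Injective f ∧
      (∀ P₁ P₂ : Submodule K ℍ[K, a, b], IsIsotropicLine₀ P₁ → IsIsotropicLine₀ P₂ →
        ∃ W, f W = (P₁, P₂)) ∧
      (∀ (γ₁ γ₂ : (ℍ[K, a, b])ˣ)
          (W W' : {W : Submodule K ℍ[K, a, b] // IsIsotropicLine W}),
          W'.1 = Submodule.map (pairMap γ₁ γ₂) W.1 →
            f W' = (Submodule.map (conjMap γ₁) (f W).1,
                    Submodule.map (conjMap γ₂) (f W).2)) := by
  classical
  have hgen : ∀ W : {W : Submodule K ℍ[K, a, b] // IsIsotropicLine W},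
      ∃ u : ℍ[K, a, b], u ≠ 0 ∧ W.1 = Submodule.span K {u} :=
    fun W => exists_gen W.2.1
  choose g hg0 hgspan using hgen
  have hgmem : ∀ W, g W ∈ W.1 := fun W => by
    rw [hgspan W]; exact Submodule.mem_span_singleton_self _
  have hgN : ∀ W, Nrd (g W) = 0 := fun W => W.2.2 _ (hgmem W)
  refine ⟨fun W => (LinearMap.ker (LinearMap.mulRight K (g W)) ⊓ pureQuaternions K a b,
                    LinearMap.ker (LinearMap.mulLeft K (g W)) ⊓ pureQuaternions K a b),
    ?_, ?_, ?_, ?_, ?_⟩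
  · -- characterization on generators
    intro W u hu hWu
    have hgu : g W ∈ Submodule.span K ({u} : Set ℍ[K, a, b]) := by
      rw [← hWu]; exact hgmem W
    obtain ⟨h1, h2⟩ := kers_eq (hg0 W) hgu
    simp only [Prod.mk.injEq]
    exact ⟨by rw [h1], by rw [h2]⟩
  · -- both components are isotropic lines in B₀
    intro W
    constructor
    · refine ⟨⟨finrank_inf_right hchar ha hb (hg0 W) (hgN W), ?_⟩, inf_le_right⟩
      intro x hx
      have h := LinearMap.mem_ker.mp (Submodule.mem_inf.mp hx).1
      rw [LinearMap.mulRight_apply] at h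
      exact nrd_zero_of_mul_left h (hg0 W)
    · refine ⟨⟨finrank_inf_left hchar ha hb (hg0 W) (hgN W), ?_⟩, inf_le_right⟩
      intro x hx
      have h := LinearMap.mem_ker.mp (Submodule.mem_inf.mp hx).1
      rw [LinearMap.mulLeft_apply] at h
      exact nrd_zero_of_mul_right h (hg0 W)
  · -- injectivity
    intro W W' hff
    simp only [Prod.mk.injEq] at hff
    obtain ⟨hf1, hf2⟩ := hff
    obtain ⟨m, hm0, hmspan⟩ := exists_gen (finrank_inf_right hchar ha hb (hg0 W) (hgN W))
    obtain ⟨n, hn0, hnspan⟩ := exists_gen (finrank_inf_left hchar ha hb (hg0 W) (hgN W))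
    have hmmem : m ∈ LinearMap.ker (LinearMap.mulRight K (g W)) ⊓ pureQuaternions K a b := by
      rw [hmspan]; exact Submodule.mem_span_singleton_self _
    have hnmem : n ∈ LinearMap.ker (LinearMap.mulLeft K (g W)) ⊓ pureQuaternions K a b := by
      rw [hnspan]; exact Submodule.mem_span_singleton_self _
    have hmmem' : m ∈ LinearMap.ker (LinearMap.mulRight K (g W')) ⊓ pureQuaternions K a b := by
      rw [← hf1]; exact hmmem
    have hnmem' : n ∈ LinearMap.ker (LinearMap.mulLeft K (g W')) ⊓ pureQuaternions K a b := by
      rw [← hf2]; exact hnmem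
    have hmu : m * g W = 0 := by
      have := LinearMap.mem_ker.mp (Submodule.mem_inf.mp hmmem).1
      rwa [LinearMap.mulRight_apply] at this
    have hmu' : m * g W' = 0 := by
      have := LinearMap.mem_ker.mp (Submodule.mem_inf.mp hmmem').1
      rwa [LinearMap.mulRight_apply] at this
    have hun : g W * n = 0 := by
      have := LinearMap.mem_ker.mp (Submodule.mem_inf.mp hnmem).1
      rwa [LinearMap.mulLeft_apply] at this
    have hu'n : g W' * n = 0 := by
      have := LinearMap.mem_ker.mp (Submodule.mem_inf.mp hnmem').1
      rwa [LinearMap.mulLeft_apply] at this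
    have hNm : Nrd m = 0 := nrd_zero_of_mul_left hmu (hg0 W)
    have hNn : Nrd n = 0 := nrd_zero_of_mul_right hun (hg0 W)
    have hspan := span_eq_span hchar ha hb (hg0 W) (hg0 W') hm0 hn0 hNm hNn hmu hmu' hun hu'n
    apply Subtype.ext
    rw [hgspan W, hgspan W', hspan]
  · -- surjectivity
    intro P₁ P₂ h₁ h₂
    obtain ⟨m, hm0, hP1span⟩ := exists_gen h₁.1.1
    obtain ⟨n, hn0, hP2span⟩ := exists_gen h₂.1.1
    have hmP : m ∈ P₁ := by rw [hP1span]; exact Submodule.mem_span_singleton_self _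
    have hnP : n ∈ P₂ := by rw [hP2span]; exact Submodule.mem_span_singleton_self _
    have hNm : Nrd m = 0 := h₁.1.2 m hmP
    have hNn : Nrd n = 0 := h₂.1.2 n hnP
    have hTm : Trd m = 0 := h₁.2 hmP
    have hTn : Trd n = 0 := h₂.2 hnP
    have hmm : m * m = 0 := sq_zero hchar hTm hNm
    have hnn : n * n = 0 := sq_zero hchar hTn hNn
    set u := if m * n = 0 then n else m * n with hudef
    have hu0 : u ≠ 0 := by
      rw [hudef]; split_ifs with h
      · exact hn0
      · exact h
    have hmu : m * u = 0 := by
      rw [hudef]; split_ifs with h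
      · exact h
      · rw [← mul_assoc, hmm, zero_mul]
    have hun : u * n = 0 := by
      rw [hudef]; split_ifs with h
      · exact hnn
      · rw [mul_assoc, hnn, mul_zero]
    have hNu : Nrd u = 0 := by
      rw [hudef]; split_ifs with h
      · exact hNn
      · exact nrd_mul_zero hNn
    have hline : IsIsotropicLine (Submodule.span K ({u} : Set ℍ[K, a, b])) := by
      refine ⟨finrank_span_singleton hu0, ?_⟩
      intro x hx
      obtain ⟨c, rfl⟩ := Submodule.mem_span_singleton.mp hx
      rw [nrd_smul, hNu, mul_zero]
    refine ⟨⟨Submodule.span K {u}, hline⟩, ?_⟩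
    set W : {W : Submodule K ℍ[K, a, b] // IsIsotropicLine W} :=
      ⟨Submodule.span K {u}, hline⟩ with hWdef
    have hgu : g W ∈ Submodule.span K ({u} : Set ℍ[K, a, b]) := hgmem W
    obtain ⟨hk1, hk2⟩ := kers_eq (hg0 W) hgu
    have e1 : LinearMap.ker (LinearMap.mulRight K u) ⊓ pureQuaternions K a b = P₁ := by
      have hmem : m ∈ LinearMap.ker (LinearMap.mulRight K u) ⊓ pureQuaternions K a b :=
        Submodule.mem_inf.mpr
          ⟨LinearMap.mem_ker.mpr (by rw [LinearMap.mulRight_apply]; exact hmu), mem_pure.mpr hTm⟩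
      rw [span_eq_of_mem (finrank_inf_right hchar ha hb hu0 hNu) hmem hm0, ← hP1span]
    have e2 : LinearMap.ker (LinearMap.mulLeft K u) ⊓ pureQuaternions K a b = P₂ := by
      have hmem : n ∈ LinearMap.ker (LinearMap.mulLeft K u) ⊓ pureQuaternions K a b :=
        Submodule.mem_inf.mpr
          ⟨LinearMap.mem_ker.mpr (by rw [LinearMap.mulLeft_apply]; exact hun), mem_pure.mpr hTn⟩
      rw [span_eq_of_mem (finrank_inf_left hchar ha hb hu0 hNu) hmem hn0, ← hP2span]
    simp only [Prod.mk.injEq]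
    exact ⟨by rw [← hk1, e1], by rw [← hk2, e2]⟩
  · -- equivariance
    intro γ₁ γ₂ W W' hmap
    set u := g W with hudef
    set u' := (γ₁ : ℍ[K, a, b]) * u * ((γ₂⁻¹ : (ℍ[K, a, b])ˣ) : ℍ[K, a, b]) with hu'def
    have hpair : pairMap γ₁ γ₂ u = u' := rfl
    have hW' : W'.1 = Submodule.span K ({u'} : Set ℍ[K, a, b]) := by
      rw [hmap, hgspan W, Submodule.map_span, Set.image_singleton, hpair]
    have hu'0 : u' ≠ 0 := by
      rw [hu'def]
      intro h
      rw [Units.mul_left_eq_zero, Units.mul_right_eq_zero] at h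
      exact hg0 W h
    have hNu' : Nrd u' = 0 := W'.2.2 u' (by
      rw [hW']; exact Submodule.mem_span_singleton_self _)
    obtain ⟨m, hm0, hmspan⟩ := exists_gen (finrank_inf_right hchar ha hb (hg0 W) (hgN W))
    obtain ⟨n, hn0, hnspan⟩ := exists_gen (finrank_inf_left hchar ha hb (hg0 W) (hgN W))
    have hmmem : m ∈ LinearMap.ker (LinearMap.mulRight K u) ⊓ pureQuaternions K a b := by
      rw [hmspan]; exact Submodule.mem_span_singleton_self _
    have hnmem : n ∈ LinearMap.ker (LinearMap.mulLeft K u) ⊓ pureQuaternions K a b := by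
      rw [hnspan]; exact Submodule.mem_span_singleton_self _
    have hmu : m * u = 0 := by
      have := LinearMap.mem_ker.mp (Submodule.mem_inf.mp hmmem).1
      rwa [LinearMap.mulRight_apply] at this
    have hun : u * n = 0 := by
      have := LinearMap.mem_ker.mp (Submodule.mem_inf.mp hnmem).1
      rwa [LinearMap.mulLeft_apply] at this
    have hTm : Trd m = 0 := (Submodule.mem_inf.mp hmmem).2
    have hTn : Trd n = 0 := (Submodule.mem_inf.mp hnmem).2
    set m' := (γ₁ : ℍ[K, a, b]) * m * ((γ₁⁻¹ : (ℍ[K, a, b])ˣ) : ℍ[K, a, b]) with hm'def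
    set n' := (γ₂ : ℍ[K, a, b]) * n * ((γ₂⁻¹ : (ℍ[K, a, b])ˣ) : ℍ[K, a, b]) with hn'def
    have hconjm : conjMap γ₁ m = m' := rfl
    have hconjn : conjMap γ₂ n = n' := rfl
    have hm'0 : m' ≠ 0 := by
      rw [hm'def]
      intro h
      rw [Units.mul_left_eq_zero, Units.mul_right_eq_zero] at h
      exact hm0 h
    have hn'0 : n' ≠ 0 := by
      rw [hn'def]
      intro h
      rw [Units.mul_left_eq_zero, Units.mul_right_eq_zero] at h
      exact hn0 h
    have hTm' : Trd m' = 0 := by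
      rw [hm'def, trd_mul_comm, Units.inv_mul_cancel_left]
      exact hTm
    have hTn' : Trd n' = 0 := by
      rw [hn'def, trd_mul_comm, Units.inv_mul_cancel_left]
      exact hTn
    have hm'u' : m' * u' = 0 := by
      rw [hm'def, hu'def]
      simp only [mul_assoc, Units.inv_mul_cancel_left]
      rw [← mul_assoc m u, hmu, zero_mul, mul_zero]
    have hu'n' : u' * n' = 0 := by
      rw [hn'def, hu'def]
      simp only [mul_assoc, Units.inv_mul_cancel_left]
      rw [← mul_assoc u n, hun, zero_mul, mul_zero]
    have hgW' : g W' ∈ Submodule.span K ({u'} : Set ℍ[K, a, b]) := by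
      rw [← hW']; exact hgmem W'
    obtain ⟨hk1, hk2⟩ := kers_eq (hg0 W') hgW'
    have e1 : LinearMap.ker (LinearMap.mulRight K u') ⊓ pureQuaternions K a b =
        Submodule.map (conjMap γ₁)
          (LinearMap.ker (LinearMap.mulRight K u) ⊓ pureQuaternions K a b) := by
      rw [hmspan, Submodule.map_span, Set.image_singleton, hconjm]
      have hmem : m' ∈ LinearMap.ker (LinearMap.mulRight K u') ⊓ pureQuaternions K a b :=
        Submodule.mem_inf.mpr
          ⟨LinearMap.mem_ker.mpr (by rw [LinearMap.mulRight_apply]; exact hm'u'),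
            mem_pure.mpr hTm'⟩
      exact span_eq_of_mem (finrank_inf_right hchar ha hb hu'0 hNu') hmem hm'0
    have e2 : LinearMap.ker (LinearMap.mulLeft K u') ⊓ pureQuaternions K a b =
        Submodule.map (conjMap γ₂)
          (LinearMap.ker (LinearMap.mulLeft K u) ⊓ pureQuaternions K a b) := by
      rw [hnspan, Submodule.map_span, Set.image_singleton, hconjn]
      have hmem : n' ∈ LinearMap.ker (LinearMap.mulLeft K u') ⊓ pureQuaternions K a b :=
        Submodule.mem_inf.mpr
          ⟨LinearMap.mem_ker.mpr (by rw [LinearMap.mulLeft_apply]; exact hu'n'),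
            mem_pure.mpr hTn'⟩
      exact span_eq_of_mem (finrank_inf_left hchar ha hb hu'0 hNu') hmem hn'0
    simp only [Prod.mk.injEq]
    exact ⟨by rw [← hk1, e1], by rw [← hk2, e2]⟩
end

section
/- Let B be a quaternion algebra over ℚ, K/ℚ a quadratic field extension, and ω an isotropic line in (B₀)_K spanned by a vector not defined over ℚ (i.e. ω is a 'quadratic point'). Define K_ω = { γ ∈ B : γ·u = λ_γ·u for a unique λ_γ ∈ K }, where u spans ω. Then the map γ ↦ λ_γ is an injective ring homomorphism K_ω → K, and K_ω is isomorphic as a ℚ-algebra to K. Moreover this isomorphism intertwines the reduced norm on B with the field norm of K/ℚ. -/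
open Quaternion

/-- Base change of quaternions along `algebraMap K L`, componentwise. -/
def baseChange {K L : Type*} [Field K] [Field L] [Algebra K L] {a b : K}
    (x : ℍ[K, a, b]) : ℍ[L, algebraMap K L a, algebraMap K L b] :=
  ⟨algebraMap K L x.re, algebraMap K L x.imI, algebraMap K L x.imJ, algebraMap K L x.imK⟩

section
variable {K : Type*} [Field K] [Algebra ℚ K]

lemma expand_pair (hK : Module.finrank ℚ K = 2)
    {x : K} (hx : ∀ r : ℚ, x ≠ algebraMap ℚ K r) (y : K) :
    ∃ α β : ℚ, y = algebraMap ℚ K α + algebraMap ℚ K β * x := by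
  have : FiniteDimensional ℚ K := FiniteDimensional.of_finrank_eq_succ hK
  have hli : LinearIndependent ℚ ![x, 1] := by
    rw [linearIndependent_fin2]
    refine ⟨one_ne_zero, fun r hr => hx r ?_⟩
    simp only [Matrix.cons_val_one, Matrix.head_cons, Matrix.cons_val_zero] at hr
    rw [← hr, Algebra.smul_def, mul_one]
  have hsp := hli.span_eq_top_of_card_eq_finrank (by simp [hK])
  have hy : y ∈ Submodule.span ℚ (Set.range ![x, (1:K)]) := by rw [hsp]; trivial
  have h2 : Set.range ![x, (1:K)] = {x, 1} := by
    ext z; simp [Fin.exists_fin_two]; tauto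
  rw [h2, Submodule.mem_span_pair] at hy
  obtain ⟨β, α, h⟩ := hy
  exact ⟨α, β, by rw [← h]; rw [Algebra.smul_def, Algebra.smul_def, mul_one]; ring⟩

lemma exists_nonrational (hK : Module.finrank ℚ K = 2) :
    ∃ w : K, ∀ r : ℚ, w ≠ algebraMap ℚ K r := by
  by_contra hcon
  push_neg at hcon
  have hsp : Submodule.span ℚ {(1:K)} = ⊤ := by
    rw [Submodule.eq_top_iff']
    intro y
    obtain ⟨r, hr⟩ := hcon y
    rw [Submodule.mem_span_singleton]
    exact ⟨r, by rw [Algebra.smul_def, mul_one, hr]⟩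
  have h1 : Module.finrank ℚ K = 1 := by
    rw [← finrank_top ℚ K, ← hsp, finrank_span_singleton (one_ne_zero : (1:K) ≠ 0)]
  rw [hK] at h1; exact absurd h1 (by norm_num)

lemma exists_sigma (hK : Module.finrank ℚ K = 2) :
    ∃ (σ : K →+* K) (s : K),
      (∀ r : ℚ, σ (algebraMap ℚ K r) = algebraMap ℚ K r) ∧
      (∀ p, σ (σ p) = p) ∧
      (∀ p, σ p = p → ∃ r : ℚ, p = algebraMap ℚ K r) ∧
      s ≠ 0 ∧ σ s = -s ∧ (∀ r : ℚ, s ≠ algebraMap ℚ K r) := by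
  classical
  have hchar : CharZero K := charZero_of_injective_algebraMap (algebraMap ℚ K).injective
  obtain ⟨w, hw⟩ := exists_nonrational hK
  obtain ⟨p, q, hpq⟩ := expand_pair hK hw (w * w)
  have hs : ∀ r : ℚ, 2 * w - algebraMap ℚ K q ≠ algebraMap ℚ K r := by
    intro r hr
    apply hw ((r + q)/2)
    have h2 : (algebraMap ℚ K) 2 = 2 := by norm_num
    rw [map_div₀, map_add, h2, eq_div_iff (two_ne_zero (α := K))]
    linear_combination hr
  obtain ⟨s, hs_def⟩ : ∃ s : K, s = 2 * w - algebraMap ℚ K q := ⟨_, rfl⟩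
  rw [← hs_def] at hs
  have hs0 : s ≠ 0 := by simpa using hs 0
  have hd : s * s = algebraMap ℚ K (4*p + q^2) := by
    rw [hs_def]
    simp only [map_add, map_mul, map_pow, map_ofNat]
    linear_combination (4:K) * hpq
  obtain ⟨d, hd_def⟩ : ∃ d : ℚ, d = 4*p + q^2 := ⟨_, rfl⟩
  rw [← hd_def] at hd
  have huniq : ∀ α β α' β' : ℚ, algebraMap ℚ K α + algebraMap ℚ K β * s
      = algebraMap ℚ K α' + algebraMap ℚ K β' * s → α = α' ∧ β = β' := by
    intro α β α' β' h
    have hββ : β = β' := by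
      by_contra hββ
      have hββ' : algebraMap ℚ K (β - β') ≠ 0 := by
        simp only [ne_eq, map_eq_zero]; exact sub_ne_zero.mpr hββ
      apply hs ((α' - α)/(β - β'))
      rw [map_div₀]
      refine (eq_div_iff hββ').mpr ?_
      rw [map_sub, map_sub]
      linear_combination h
    subst hββ
    refine ⟨?_, rfl⟩
    have : algebraMap ℚ K α = algebraMap ℚ K α' := by linear_combination h
    exact (algebraMap ℚ K).injective this
  choose A B hAB using expand_pair hK hs
  have hrep : ∀ (y : K) (α β : ℚ), y = algebraMap ℚ K α + algebraMap ℚ K β * s →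
      algebraMap ℚ K (A y) - algebraMap ℚ K (B y) * s
        = algebraMap ℚ K α - algebraMap ℚ K β * s := by
    intro y α β h
    obtain ⟨h1, h2⟩ := huniq (A y) (B y) α β (by rw [← hAB y, ← h])
    rw [h1, h2]
  refine ⟨⟨⟨⟨fun y => algebraMap ℚ K (A y) - algebraMap ℚ K (B y) * s, ?one⟩, ?mul⟩, ?zero, ?add⟩, s,
    ?_, ?_, ?_, hs0, ?_, hs⟩
  case one =>
    show algebraMap ℚ K (A 1) - algebraMap ℚ K (B 1) * s = 1
    rw [hrep 1 1 0 (by simp), map_zero, map_one]; ring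
  case zero =>
    show algebraMap ℚ K (A 0) - algebraMap ℚ K (B 0) * s = 0
    rw [hrep 0 0 0 (by simp), map_zero]; ring
  · -- mul
    intro x y
    show algebraMap ℚ K (A (x*y)) - algebraMap ℚ K (B (x*y)) * s = _
    have hxy : x * y = algebraMap ℚ K (A x * A y + B x * B y * d)
        + algebraMap ℚ K (A x * B y + B x * A y) * s := by
      simp only [map_add, map_mul]
      linear_combination (algebraMap ℚ K (B x) * algebraMap ℚ K (B y)) * hd
        + (algebraMap ℚ K (A y) + algebraMap ℚ K (B y) * s) * hAB x + x * hAB y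
    rw [hrep _ _ _ hxy]
    show _ = (algebraMap ℚ K (A x) - algebraMap ℚ K (B x) * s)
      * (algebraMap ℚ K (A y) - algebraMap ℚ K (B y) * s)
    simp only [map_add, map_mul]
    linear_combination - (algebraMap ℚ K (B x) * algebraMap ℚ K (B y)) * hd
  · -- add
    intro x y
    show algebraMap ℚ K (A (x+y)) - algebraMap ℚ K (B (x+y)) * s = _
    have hxy : x + y = algebraMap ℚ K (A x + A y) + algebraMap ℚ K (B x + B y) * s := by
      simp only [map_add]; linear_combination hAB x + hAB y
    rw [hrep _ _ _ hxy]
    show _ = (algebraMap ℚ K (A x) - algebraMap ℚ K (B x) * s)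
      + (algebraMap ℚ K (A y) - algebraMap ℚ K (B y) * s)
    simp only [map_add]; ring
  · -- rational fixed
    intro r
    simp only [RingHom.coe_mk, MonoidHom.coe_mk, OneHom.coe_mk]
    rw [hrep (algebraMap ℚ K r) r 0 (by simp), map_zero]; ring
  · -- involutive
    intro x
    simp only [RingHom.coe_mk, MonoidHom.coe_mk, OneHom.coe_mk]
    rw [hrep _ (A x) (-(B x)) (by rw [map_neg]; ring), map_neg]
    linear_combination - hAB x
  · -- fixed points rational
    intro x hfix
    simp only [RingHom.coe_mk, MonoidHom.coe_mk, OneHom.coe_mk] at hfix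
    have h2 : (2:K) * (algebraMap ℚ K (B x) * s) = 0 := by
      linear_combination - hfix - hAB x
    have hB : B x = 0 := by
      by_contra hB
      have hBne : algebraMap ℚ K (B x) ≠ 0 := by
        simp only [ne_eq, map_eq_zero]; exact hB
      rcases mul_eq_zero.mp h2 with h | h
      · exact two_ne_zero h
      · rcases mul_eq_zero.mp h with h' | h'
        · exact hBne h'
        · exact hs0 h'
    refine ⟨A x, ?_⟩
    have := hAB x
    rw [hB, map_zero, zero_mul, add_zero] at this
    exact this
  · -- σ s = -s
    simp only [RingHom.coe_mk, MonoidHom.coe_mk, OneHom.coe_mk]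
    rw [hrep s 0 1 (by simp), map_zero, map_one]; ring
end

section
variable {K L : Type*} [Field K] [Field L] [Algebra K L] {a b : K}

@[simp] lemma bc_re (x : ℍ[K,a,b]) : (baseChange (L := L) x).re = algebraMap K L x.re := rfl
@[simp] lemma bc_imI (x : ℍ[K,a,b]) : (baseChange (L := L) x).imI = algebraMap K L x.imI := rfl
@[simp] lemma bc_imJ (x : ℍ[K,a,b]) : (baseChange (L := L) x).imJ = algebraMap K L x.imJ := rfl
@[simp] lemma bc_imK (x : ℍ[K,a,b]) : (baseChange (L := L) x).imK = algebraMap K L x.imK := rfl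

lemma bc_add (x y : ℍ[K,a,b]) :
    baseChange (L := L) (x + y) = baseChange x + baseChange y := by
  ext <;> simp

lemma bc_sub (x y : ℍ[K,a,b]) :
    baseChange (L := L) (x - y) = baseChange x - baseChange y := by
  ext <;> simp

lemma bc_mul (x y : ℍ[K,a,b]) :
    baseChange (L := L) (x * y) = baseChange x * baseChange y := by
  ext <;> simp [QuaternionAlgebra.re_mul, QuaternionAlgebra.imI_mul,
    QuaternionAlgebra.imJ_mul, QuaternionAlgebra.imK_mul]

lemma bc_one : baseChange (L := L) (1 : ℍ[K,a,b]) = 1 := by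
  ext <;> simp

lemma bc_zero : baseChange (L := L) (0 : ℍ[K,a,b]) = 0 := by
  ext <;> simp

lemma bc_coe (r : K) :
    baseChange (L := L) ((r : ℍ[K,a,b])) = ((algebraMap K L r : L) : ℍ[L, algebraMap K L a, algebraMap K L b]) := by
  ext <;> simp

lemma bc_inj (x y : ℍ[K,a,b]) (h : baseChange (L := L) x = baseChange y) : x = y := by
  have := QuaternionAlgebra.ext_iff.mp h
  simp only [bc_re, bc_imI, bc_imJ, bc_imK] at this
  have inj := (algebraMap K L).injective
  exact QuaternionAlgebra.ext (inj this.1) (inj this.2.1) (inj this.2.2.1) (inj this.2.2.2)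
end

lemma cross_prop {K : Type*} [Field K] {x y z X Y Z : K}
    (h1 : y*Z - z*Y = 0) (h2 : z*X - x*Z = 0) (h3 : x*Y - y*X = 0)
    (hne : ¬(x = 0 ∧ y = 0 ∧ z = 0)) :
    ∃ c : K, X = c*x ∧ Y = c*y ∧ Z = c*z := by
  by_cases hx : x ≠ 0
  · refine ⟨X/x, by field_simp, ?_, ?_⟩
    · field_simp; linear_combination h3
    · field_simp; linear_combination -h2
  by_cases hy : y ≠ 0
  · push_neg at hx
    refine ⟨Y/y, ?_, by field_simp, ?_⟩
    · field_simp; linear_combination -h3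
    · field_simp; linear_combination h1
  push_neg at hx hy
  have hz : z ≠ 0 := fun hz => hne ⟨hx, hy, hz⟩
  refine ⟨Z/z, ?_, ?_, by field_simp⟩
  · field_simp; linear_combination h2
  · field_simp; linear_combination -h1

/-- Let `B` be a quaternion algebra over `ℚ`, `K/ℚ` a quadratic field and
`ω = K·u ⊂ (B₀)_K` an isotropic line not defined over `ℚ`. Let
`K_ω = {γ ∈ B : γ·u = λ_γ·u for a (unique) λ_γ ∈ K}`. Then `γ ↦ λ_γ` is an injective ring
homomorphism `K_ω → K` which is in fact bijective (so `K_ω ≅ K` as ℚ-algebras), and it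
intertwines the reduced norm of `B` with the field norm `N_{K/ℚ}`. -/
theorem eigenvalue_ring_iso_of_quadratic_point (a b : ℚ) (ha : a ≠ 0) (hb : b ≠ 0)
    {K : Type*} [Field K] [Algebra ℚ K] (hK : Module.finrank ℚ K = 2)
    (u : ℍ[K, algebraMap ℚ K a, algebraMap ℚ K b]) (hu : u ≠ 0)
    (htrd : Trd u = 0) (hiso : Nrd u = 0)
    (hnotQ : ∀ v : ℍ[ℚ, a, b],
      Submodule.span K {u} ≠ Submodule.span K {baseChange v}) :
    ∃ lam : {γ : ℍ[ℚ, a, b] // ∃ c : K, baseChange γ * u = c • u} → K,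
      (∀ γ, baseChange γ.1 * u = lam γ • u) ∧
      (∀ γ δ σ, σ.1 = γ.1 + δ.1 → lam σ = lam γ + lam δ) ∧
      (∀ γ δ σ, σ.1 = γ.1 * δ.1 → lam σ = lam γ * lam δ) ∧
      (∀ σ, σ.1 = 1 → lam σ = 1) ∧
      Function.Bijective lam ∧
      (∀ γ, Nrd γ.1 = Algebra.norm ℚ (lam γ)) := by
  classical
  have hchar : CharZero K := charZero_of_injective_algebraMap (algebraMap ℚ K).injective
  obtain ⟨σ, s, σrat, σinv, σfix, hs0, σs, hsirr⟩ := exists_sigma hK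
  have σa : σ (algebraMap ℚ K a) = algebraMap ℚ K a := σrat a
  have σb : σ (algebraMap ℚ K b) = algebraMap ℚ K b := σrat b
  set Cj : ℍ[K, algebraMap ℚ K a, algebraMap ℚ K b] → ℍ[K, algebraMap ℚ K a, algebraMap ℚ K b] :=
    fun v => ⟨σ v.re, σ v.imI, σ v.imJ, σ v.imK⟩ with hCj
  have cj_re : ∀ v, (Cj v).re = σ v.re := fun v => rfl
  have cj_imI : ∀ v, (Cj v).imI = σ v.imI := fun v => rfl
  have cj_imJ : ∀ v, (Cj v).imJ = σ v.imJ := fun v => rfl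
  have cj_imK : ∀ v, (Cj v).imK = σ v.imK := fun v => rfl
  have cj_mul : ∀ v w, Cj (v * w) = Cj v * Cj w := by
    intro v w
    ext <;> simp only [cj_re, cj_imI, cj_imJ, cj_imK, QuaternionAlgebra.re_mul,
      QuaternionAlgebra.imI_mul, QuaternionAlgebra.imJ_mul, QuaternionAlgebra.imK_mul,
      map_add, map_sub, map_mul, σa, σb, map_zero]
  have cj_add : ∀ v w, Cj (v + w) = Cj v + Cj w := by
    intro v w
    ext <;> simp only [cj_re, cj_imI, cj_imJ, cj_imK, QuaternionAlgebra.re_add,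
      QuaternionAlgebra.imI_add, QuaternionAlgebra.imJ_add, QuaternionAlgebra.imK_add, map_add]
  have cj_sub : ∀ v w, Cj (v - w) = Cj v - Cj w := by
    intro v w
    ext <;> simp only [cj_re, cj_imI, cj_imJ, cj_imK, QuaternionAlgebra.re_sub,
      QuaternionAlgebra.imI_sub, QuaternionAlgebra.imJ_sub, QuaternionAlgebra.imK_sub, map_sub]
  have cj_smul : ∀ (c : K) v, Cj (c • v) = σ c • Cj v := by
    intro c v
    ext <;> simp only [cj_re, cj_imI, cj_imJ, cj_imK, QuaternionAlgebra.re_smul,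
      QuaternionAlgebra.imI_smul, QuaternionAlgebra.imJ_smul, QuaternionAlgebra.imK_smul,
      smul_eq_mul, map_mul]
  have cj_inv : ∀ v, Cj (Cj v) = v := by
    intro v
    ext <;> simp only [cj_re, cj_imI, cj_imJ, cj_imK, σinv]
  have cj_zero : Cj 0 = 0 := by
    ext <;> simp only [cj_re, cj_imI, cj_imJ, cj_imK, QuaternionAlgebra.re_zero,
      QuaternionAlgebra.imI_zero, QuaternionAlgebra.imJ_zero, QuaternionAlgebra.imK_zero, map_zero]
  have cj_bc : ∀ γ : ℍ[ℚ, a, b], Cj (baseChange γ) = baseChange γ := by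
    intro γ
    ext <;> simp only [cj_re, cj_imI, cj_imJ, cj_imK, bc_re, bc_imI, bc_imJ, bc_imK, σrat]
  have cj_fix : ∀ v, Cj v = v → ∃ γ : ℍ[ℚ, a, b], v = baseChange γ := by
    intro v hv
    have h := QuaternionAlgebra.ext_iff.mp hv
    obtain ⟨r1, h1⟩ := σfix v.re h.1
    obtain ⟨r2, h2⟩ := σfix v.imI h.2.1
    obtain ⟨r3, h3⟩ := σfix v.imJ h.2.2.1
    obtain ⟨r4, h4⟩ := σfix v.imK h.2.2.2
    exact ⟨⟨r1, r2, r3, r4⟩, by ext <;> simp only [bc_re, bc_imI, bc_imJ, bc_imK] <;> assumption⟩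
  -- basic facts about u
  have hre : u.re = 0 := by
    have h2 : (2:K) * u.re = 0 := htrd
    rcases mul_eq_zero.mp h2 with h | h
    · exact absurd h two_ne_zero
    · exact h
  have hN : algebraMap ℚ K a * u.imI^2 + algebraMap ℚ K b * u.imJ^2
      - algebraMap ℚ K a * algebraMap ℚ K b * u.imK^2 = 0 := by
    have h := hiso
    simp only [Nrd, QuaternionAlgebra.re_mul, QuaternionAlgebra.re_star,
      QuaternionAlgebra.imI_star, QuaternionAlgebra.imJ_star, QuaternionAlgebra.imK_star, hre] at h
    linear_combination - h
  have smul_cancel : ∀ c : K, c • u = 0 → c = 0 := by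
    intro c hc
    by_contra h
    exact hu (by rw [← inv_smul_smul₀ h u, hc, smul_zero])
  have smul_cancel' : ∀ c c' : K, c • u = c' • u → c = c' := by
    intro c c' h
    have := smul_cancel (c - c') (by rw [sub_smul, h, sub_self])
    exact sub_eq_zero.mp this
  have usq : u * u = 0 := by
    ext
    · simp only [QuaternionAlgebra.re_mul, hre, QuaternionAlgebra.re_zero]
      linear_combination hN
    · simp only [QuaternionAlgebra.imI_mul, hre, QuaternionAlgebra.imI_zero]; ring
    · simp only [QuaternionAlgebra.imJ_mul, hre, QuaternionAlgebra.imJ_zero]; ring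
    · simp only [QuaternionAlgebra.imK_mul, hre, QuaternionAlgebra.imK_zero]; ring
  have hubne : Cj u ≠ 0 := fun h => hu (by rw [← cj_inv u, h, cj_zero])
  have ubsq : Cj u * Cj u = 0 := by rw [← cj_mul, usq, cj_zero]
  have hubre : (Cj u).re = 0 := by rw [cj_re, hre, map_zero]
  set t : K := (u * Cj u).re with hT
  have hresym : ∀ v w : ℍ[K, algebraMap ℚ K a, algebraMap ℚ K b], (v * w).re = (w * v).re := by
    intro v w; simp only [QuaternionAlgebra.re_mul]; ring
  have hsum : u * Cj u + Cj u * u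
      = ((2 * t : K) : ℍ[K, algebraMap ℚ K a, algebraMap ℚ K b]) := by
    ext
    · rw [QuaternionAlgebra.re_add, QuaternionAlgebra.re_coe, hresym (Cj u) u, hT]; ring
    · simp only [QuaternionAlgebra.imI_add, QuaternionAlgebra.imI_mul, hre, hubre, map_zero,
        QuaternionAlgebra.imI_coe]; ring
    · simp only [QuaternionAlgebra.imJ_add, QuaternionAlgebra.imJ_mul, hre, hubre, map_zero,
        QuaternionAlgebra.imJ_coe]; ring
    · simp only [QuaternionAlgebra.imK_add, QuaternionAlgebra.imK_mul, hre, hubre, map_zero,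
        QuaternionAlgebra.imK_coe]; ring
  have σt : σ t = t := by
    have h1 : σ ((u * Cj u).re) = (Cj (u * Cj u)).re := rfl
    rw [hT, h1, cj_mul, cj_inv, hresym]
  obtain ⟨τ, hτ⟩ := σfix t σt
  -- no conjugate-proportionality
  have hdep_contra : ∀ c : K, Cj u ≠ c • u := by
    intro c hc
    have hc0 : c ≠ 0 := by
      intro h0; rw [h0, zero_smul] at hc; exact hubne hc
    have hcc : σ c * c = 1 := by
      refine (smul_cancel' (σ c * c) 1 ?_).symm.symm
      have h1 : u = (σ c * c) • u := by
        conv_lhs => rw [← cj_inv u, hc]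
        rw [cj_smul, hc, smul_smul]
      rw [← h1, one_smul]
    obtain ⟨e, he⟩ : ∃ e : K, e = if c = -1 then s else 1 + c := ⟨_, rfl⟩
    have he0 : e ≠ 0 := by
      rw [he]; split_ifs with h1
      · exact hs0
      · intro h2; exact h1 (by linear_combination h2)
    have hee : σ e * c = e := by
      rw [he]; split_ifs with h1
      · rw [σs, h1]; ring
      · rw [map_add, map_one]
        linear_combination hcc
    have hfixe : Cj (e • u) = e • u := by rw [cj_smul, hc, smul_smul, hee]
    obtain ⟨v, hv⟩ := cj_fix _ hfixe
    apply hnotQ v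
    rw [← hv]
    exact (Submodule.span_singleton_smul_eq (isUnit_iff_ne_zero.mpr he0) u).symm
  have ht : t ≠ 0 := by
    intro ht0
    have hA0 : algebraMap ℚ K a ≠ 0 := by simp only [ne_eq, map_eq_zero]; exact ha
    have hB0 : algebraMap ℚ K b ≠ 0 := by simp only [ne_eq, map_eq_zero]; exact hb
    have hE3 : algebraMap ℚ K a * (u.imI * σ u.imI) + algebraMap ℚ K b * (u.imJ * σ u.imJ)
        - algebraMap ℚ K a * algebraMap ℚ K b * (u.imK * σ u.imK) = 0 := by
      have h0 : t = 0 := ht0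
      rw [hT] at h0
      simp only [QuaternionAlgebra.re_mul, cj_re, cj_imI, cj_imJ, cj_imK, hre, map_zero] at h0
      linear_combination h0
    have hE2 : algebraMap ℚ K a * (σ u.imI)^2 + algebraMap ℚ K b * (σ u.imJ)^2
        - algebraMap ℚ K a * algebraMap ℚ K b * (σ u.imK)^2 = 0 := by
      have h0 := congrArg σ hN
      simp only [map_add, map_sub, map_mul, map_pow, map_zero, σa, σb] at h0
      linear_combination h0
    have hune : ¬(u.imI = 0 ∧ u.imJ = 0 ∧ u.imK = 0) := by
      rintro ⟨h1, h2, h3⟩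
      exact hu (by ext <;> simp only [hre, h1, h2, h3, QuaternionAlgebra.re_zero,
        QuaternionAlgebra.imI_zero, QuaternionAlgebra.imJ_zero, QuaternionAlgebra.imK_zero])
    have hXYZne : ¬(σ u.imI = 0 ∧ σ u.imJ = 0 ∧ σ u.imK = 0) := by
      rintro ⟨h1, h2, h3⟩
      apply hubne
      ext <;> simp only [cj_re, cj_imI, cj_imJ, cj_imK, hre, map_zero, h1, h2, h3,
        QuaternionAlgebra.re_zero, QuaternionAlgebra.imI_zero, QuaternionAlgebra.imJ_zero,
        QuaternionAlgebra.imK_zero]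
    -- minors and the auxiliary vector N
    obtain ⟨prop, hprop⟩ : ∃ prop : K, Cj u = prop • u := by
      by_cases hM0 : (u.imJ * σ u.imK - u.imK * σ u.imJ) = 0
          ∧ (u.imK * σ u.imI - u.imI * σ u.imK) = 0
          ∧ (u.imI * σ u.imJ - u.imJ * σ u.imI) = 0
      · obtain ⟨c, h1, h2, h3⟩ := cross_prop hM0.1 hM0.2.1 hM0.2.2 hune
        refine ⟨c, ?_⟩
        ext
        · rw [cj_re, hre, map_zero, QuaternionAlgebra.re_smul, hre, smul_eq_mul, mul_zero]
        · rw [cj_imI, QuaternionAlgebra.imI_smul, smul_eq_mul]; linear_combination h1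
        · rw [cj_imJ, QuaternionAlgebra.imJ_smul, smul_eq_mul]; linear_combination h2
        · rw [cj_imK, QuaternionAlgebra.imK_smul, smul_eq_mul]; linear_combination h3
      · -- N nonzero case
        obtain ⟨N1, hN1⟩ : ∃ N1 : K, N1 = -(algebraMap ℚ K b) * (u.imJ * σ u.imK - u.imK * σ u.imJ) := ⟨_, rfl⟩
        obtain ⟨N2, hN2⟩ : ∃ N2 : K, N2 = -(algebraMap ℚ K a) * (u.imK * σ u.imI - u.imI * σ u.imK) := ⟨_, rfl⟩
        obtain ⟨N3, hN3⟩ : ∃ N3 : K, N3 = u.imI * σ u.imJ - u.imJ * σ u.imI := ⟨_, rfl⟩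
        have cu1 : u.imJ * N3 - u.imK * N2 = 0 := by
          have h' : algebraMap ℚ K b * (u.imJ * N3 - u.imK * N2) = 0 := by
            rw [hN3, hN2]
            linear_combination u.imI * hE3 - (σ u.imI) * hN
          rcases mul_eq_zero.mp h' with h'' | h''
          · exact absurd h'' hB0
          · exact h''
        have cu2 : u.imK * N1 - u.imI * N3 = 0 := by
          have h' : algebraMap ℚ K a * (u.imK * N1 - u.imI * N3) = 0 := by
            rw [hN1, hN3]
            linear_combination (u.imJ * hE3) - (σ u.imJ) * hN
          rcases mul_eq_zero.mp h' with h'' | h''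
          · exact absurd h'' hA0
          · exact h''
        have cu3 : u.imI * N2 - u.imJ * N1 = 0 := by
          rw [hN1, hN2]
          linear_combination (σ u.imK) * hN - u.imK * hE3
        have cub1 : σ u.imJ * N3 - σ u.imK * N2 = 0 := by
          have h' : algebraMap ℚ K b * (σ u.imJ * N3 - σ u.imK * N2) = 0 := by
            rw [hN3, hN2]
            linear_combination u.imI * hE2 - (σ u.imI) * hE3
          rcases mul_eq_zero.mp h' with h'' | h''
          · exact absurd h'' hB0
          · exact h''
        have cub2 : σ u.imK * N1 - σ u.imI * N3 = 0 := by
          have h' : algebraMap ℚ K a * (σ u.imK * N1 - σ u.imI * N3) = 0 := by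
            rw [hN1, hN3]
            linear_combination (u.imJ * hE2) - (σ u.imJ) * hE3
          rcases mul_eq_zero.mp h' with h'' | h''
          · exact absurd h'' hA0
          · exact h''
        have cub3 : σ u.imI * N2 - σ u.imJ * N1 = 0 := by
          rw [hN1, hN2]
          linear_combination (σ u.imK) * hE3 - u.imK * hE2
        obtain ⟨c1, k1, k2, k3⟩ := cross_prop cu1 cu2 cu3 hune
        obtain ⟨c2, l1, l2, l3⟩ := cross_prop cub1 cub2 cub3 hXYZne
        have hc2 : c2 ≠ 0 := by
          intro h0
          rw [h0, zero_mul] at l1 l2 l3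
          apply hM0
          have hn1 : algebraMap ℚ K b * (u.imJ * σ u.imK - u.imK * σ u.imJ) = 0 := by
            rw [← neg_eq_zero, ← neg_mul, ← hN1, l1]
          have hn2 : algebraMap ℚ K a * (u.imK * σ u.imI - u.imI * σ u.imK) = 0 := by
            rw [← neg_eq_zero, ← neg_mul, ← hN2, l2]
          refine ⟨?_, ?_, by rw [← hN3, l3]⟩
          · rcases mul_eq_zero.mp hn1 with h'' | h''
            · exact absurd h'' hB0
            · exact h''
          · rcases mul_eq_zero.mp hn2 with h'' | h''
            · exact absurd h'' hA0
            · exact h''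
        refine ⟨c1 / c2, ?_⟩
        ext
        · rw [cj_re, hre, map_zero, QuaternionAlgebra.re_smul, hre, smul_eq_mul, mul_zero]
        · rw [cj_imI, QuaternionAlgebra.imI_smul, smul_eq_mul]
          rw [div_mul_eq_mul_div, eq_div_iff hc2]
          linear_combination k1 - l1
        · rw [cj_imJ, QuaternionAlgebra.imJ_smul, smul_eq_mul]
          rw [div_mul_eq_mul_div, eq_div_iff hc2]
          linear_combination k2 - l2
        · rw [cj_imK, QuaternionAlgebra.imK_smul, smul_eq_mul]
          rw [div_mul_eq_mul_div, eq_div_iff hc2]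
          linear_combination k3 - l3
    exact hdep_contra prop hprop
  -- annihilator lemma
  have hAnn : ∀ δ : ℍ[ℚ, a, b], baseChange δ * u = 0 → δ = 0 := by
    intro δ h
    have h2 : baseChange δ * Cj u = 0 := by
      have := cj_mul (baseChange δ) u
      rw [cj_bc] at this
      rw [← this, h, cj_zero]
    have h3 : baseChange δ * ((2 * t : K) : ℍ[K, algebraMap ℚ K a, algebraMap ℚ K b]) = 0 := by
      rw [← hsum, mul_add, ← mul_assoc, ← mul_assoc, h, h2, zero_mul, zero_mul, add_zero]
    have h3' : (2*t) • baseChange (L := K) δ = 0 := by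
      rw [← QuaternionAlgebra.mul_coe_eq_smul]; exact h3
    have h4 : baseChange (L := K) δ = 0 := by
      have h2t : (2 * t : K) ≠ 0 := by
        intro h'; exact ht (by rcases mul_eq_zero.mp h' with h'' | h''; exact absurd h'' two_ne_zero; exact h'')
      rw [← inv_smul_smul₀ h2t (baseChange (L := K) δ), h3', smul_zero]
    exact bc_inj _ _ (by rw [h4, bc_zero])
  -- the special element g with irrational eigenvalue
  obtain ⟨g, hg⟩ : ∃ g, g = s • (u * Cj u - Cj u * u) := ⟨_, rfl⟩
  have hcjg : Cj g = g := by
    rw [hg, cj_smul, σs]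
    have h1 : Cj (u * Cj u - Cj u * u) = -(u * Cj u - Cj u * u) := by
      rw [cj_sub, cj_mul, cj_mul, cj_inv, neg_sub]
    rw [h1, smul_neg, neg_smul, neg_neg]
  obtain ⟨γ₀, hγ₀⟩ := cj_fix g hcjg
  have h2t : (2 * t : K) ≠ 0 := by
    intro h'
    rcases mul_eq_zero.mp h' with h'' | h''
    · exact two_ne_zero h''
    · exact ht h''
  have hgu : g * u = (s * (2 * t)) • u := by
    have hz : Cj u * u * u = 0 := by rw [mul_assoc, usq, mul_zero]
    have h2 : u * Cj u * u = (2 * t) • u := by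
      have h3 : u * Cj u = ((2*t : K) : ℍ[K, algebraMap ℚ K a, algebraMap ℚ K b]) - Cj u * u :=
        eq_sub_of_add_eq hsum
      rw [h3, sub_mul, hz, sub_zero, QuaternionAlgebra.coe_mul_eq_smul]
    rw [hg, smul_mul_assoc, sub_mul, hz, sub_zero, h2, smul_smul]
  have hτ0 : τ ≠ 0 := by intro h'; apply ht; rw [hτ, h', map_zero]
  have hc₀irr : ∀ r : ℚ, s * (2 * t) ≠ algebraMap ℚ K r := by
    intro r hr
    apply hsirr (r / (2 * τ))
    have hφ2 : algebraMap ℚ K (2*τ) = 2 * t := by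
      rw [map_mul, ← hτ]; norm_num
    rw [map_div₀, hφ2, eq_div_iff h2t]
    exact hr
  -- the eigenvalue function
  have key : ∀ (γ : ℍ[ℚ, a, b]) (c c' : K), baseChange γ * u = c • u →
      baseChange γ * u = c' • u → c = c' := by
    intro γ c c' h1 h2; exact smul_cancel' c c' (by rw [← h1, ← h2])
  obtain ⟨lam, hlam⟩ : ∃ lam : {γ : ℍ[ℚ, a, b] // ∃ c : K, baseChange γ * u = c • u} → K,
      ∀ γ, baseChange γ.1 * u = lam γ • u :=
    ⟨fun γ => Classical.choose γ.2, fun γ => Classical.choose_spec γ.2⟩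
  refine ⟨lam, hlam, ?_, ?_, ?_, ⟨?_, ?_⟩, ?_⟩
  · -- additive
    intro γ δ σ' hσ'
    refine key _ _ _ (hlam σ') ?_
    rw [hσ', bc_add, add_mul, hlam γ, hlam δ, add_smul]
  · -- multiplicative
    intro γ δ σ' hσ'
    refine key _ _ _ (hlam σ') ?_
    rw [hσ', bc_mul, mul_assoc, hlam δ, mul_smul_comm, hlam γ, smul_smul, mul_comm (lam δ)]
  · -- unital
    intro σ' hσ'
    refine key _ _ _ (hlam σ') ?_
    rw [hσ', bc_one, one_mul, one_smul]
  · -- injective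
    intro γ δ h
    have h1 : baseChange (γ.1 - δ.1) * u = 0 := by
      rw [bc_sub, sub_mul, hlam γ, hlam δ, h, sub_self]
    exact Subtype.ext (sub_eq_zero.mp (hAnn _ h1))
  · -- surjective
    intro c
    obtain ⟨α, β, hc⟩ := expand_pair hK hc₀irr c
    have hγc : baseChange ((α : ℍ[ℚ, a, b]) + (β : ℍ[ℚ, a, b]) * γ₀) * u = c • u := by
      rw [bc_add, bc_mul, bc_coe, bc_coe, ← hγ₀, add_mul, mul_assoc, hgu,
        QuaternionAlgebra.coe_mul_eq_smul, QuaternionAlgebra.coe_mul_eq_smul,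
        smul_smul, ← add_smul, ← hc]
    exact ⟨⟨_, c, hγc⟩, key _ _ _ (hlam _) hγc⟩
  · -- norms
    intro γ
    have hchar_eq : γ.1 * γ.1 = ((Trd γ.1 : ℚ) : ℍ[ℚ, a, b]) * γ.1 - ((Nrd γ.1 : ℚ) : ℍ[ℚ, a, b]) := by
      ext <;> simp only [Trd, Nrd, QuaternionAlgebra.re_mul, QuaternionAlgebra.imI_mul,
        QuaternionAlgebra.imJ_mul, QuaternionAlgebra.imK_mul, QuaternionAlgebra.re_sub,
        QuaternionAlgebra.imI_sub, QuaternionAlgebra.imJ_sub, QuaternionAlgebra.imK_sub,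
        QuaternionAlgebra.re_coe, QuaternionAlgebra.imI_coe, QuaternionAlgebra.imJ_coe,
        QuaternionAlgebra.imK_coe, QuaternionAlgebra.re_star, QuaternionAlgebra.imI_star,
        QuaternionAlgebra.imJ_star, QuaternionAlgebra.imK_star] <;> ring
    have hsq : baseChange (γ.1 * γ.1) * u = (lam γ * lam γ) • u := by
      rw [bc_mul, mul_assoc, hlam γ, mul_smul_comm, hlam γ, smul_smul]
    have hrhs : baseChange (((Trd γ.1 : ℚ) : ℍ[ℚ, a, b]) * γ.1 - ((Nrd γ.1 : ℚ) : ℍ[ℚ, a, b])) * u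
        = (algebraMap ℚ K (Trd γ.1) * lam γ - algebraMap ℚ K (Nrd γ.1)) • u := by
      rw [bc_sub, bc_mul, bc_coe, bc_coe, sub_mul, mul_assoc, hlam γ,
        QuaternionAlgebra.coe_mul_eq_smul, QuaternionAlgebra.coe_mul_eq_smul,
        smul_smul, sub_smul]
    have hcc : lam γ * lam γ = algebraMap ℚ K (Trd γ.1) * lam γ - algebraMap ℚ K (Nrd γ.1) := by
      refine smul_cancel' _ _ ?_
      rw [← hsq, ← hrhs, hchar_eq]
    by_cases hrat : ∃ r : ℚ, lam γ = algebraMap ℚ K r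
    · obtain ⟨r, hr⟩ := hrat
      have h0 : baseChange (γ.1 - (r : ℍ[ℚ, a, b])) * u = 0 := by
        rw [bc_sub, sub_mul, hlam γ, hr, bc_coe, QuaternionAlgebra.coe_mul_eq_smul, sub_self]
      have hγr : γ.1 = (r : ℍ[ℚ, a, b]) := sub_eq_zero.mp (hAnn _ h0)
      have h1 : Nrd ((r : ℍ[ℚ, a, b])) = r^2 := by
        simp only [Nrd, QuaternionAlgebra.re_mul, QuaternionAlgebra.re_star,
          QuaternionAlgebra.imI_star, QuaternionAlgebra.imJ_star, QuaternionAlgebra.imK_star,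
          QuaternionAlgebra.re_coe, QuaternionAlgebra.imI_coe, QuaternionAlgebra.imJ_coe,
          QuaternionAlgebra.imK_coe]
        ring
      rw [hγr, hr, h1, Algebra.norm_algebraMap, hK]
    · push_neg at hrat
      have hfd : FiniteDimensional ℚ K := FiniteDimensional.of_finrank_eq_succ hK
      have hli : LinearIndependent ℚ ![lam γ, 1] := by
        rw [linearIndependent_fin2]
        refine ⟨one_ne_zero, fun r hr => hrat r ?_⟩
        simp only [Matrix.cons_val_one, Matrix.head_cons, Matrix.cons_val_zero] at hr
        rw [← hr, Algebra.smul_def, mul_one]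
      obtain ⟨bb, hbb⟩ : ∃ bb : Module.Basis (Fin 2) ℚ K, ⇑bb = ![lam γ, 1] :=
        ⟨basisOfLinearIndependentOfCardEqFinrank hli (by simp [hK]),
          coe_basisOfLinearIndependentOfCardEqFinrank hli (by simp [hK])⟩
      have hbb0 : bb 0 = lam γ := by rw [hbb]; rfl
      have hbb1 : bb 1 = (1 : K) := by rw [hbb]; rfl
      have hmul0 : lam γ * bb 0 = Trd γ.1 • bb 0 + (-(Nrd γ.1)) • bb 1 := by
        rw [hbb0, hbb1, Algebra.smul_def, Algebra.smul_def, mul_one, map_neg]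
        linear_combination hcc
      have hmul1 : lam γ * bb 1 = (1:ℚ) • bb 0 + (0:ℚ) • bb 1 := by
        rw [hbb0, hbb1, mul_one, one_smul, zero_smul, add_zero]
      have hM : Algebra.leftMulMatrix bb (lam γ) = !![Trd γ.1, 1; -(Nrd γ.1), 0] := by
        ext i j
        rw [Algebra.leftMulMatrix_eq_repr_mul]
        fin_cases j
        · rw [show bb ⟨0, by norm_num⟩ = bb 0 from rfl, hmul0, map_add, map_smul, map_smul,
            Module.Basis.repr_self, Module.Basis.repr_self]
          fin_cases i <;> simp
        · rw [show bb ⟨1, by norm_num⟩ = bb 1 from rfl, hmul1, map_add, map_smul, map_smul,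
            Module.Basis.repr_self, Module.Basis.repr_self]
          fin_cases i <;> simp
      rw [Algebra.norm_eq_matrix_det bb, hM, Matrix.det_fin_two_of]
      ring
end
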